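/- arXiv:1705.03519 — 6 statements merged into one kernel-verified Lean document; each statement's English description precedes it below -/
import Mathlib

section
/- Let N ≥ 1, χ > 0, k ∈ (−N, 0), m > 1, M > 0 and R > 0. Define ρ_*(x) := (M N / (σ_N R^N)) · 1_{B_R}(x), where B_R is the ball of radius R centered at the origin and σ_N = 2π^{N/2}/Γ(N/2) is the surface area of the unit sphere in ℝ^N. Then ℱ[ρ_*] ≤ (M^m N^{m−1} σ_N^{1−m} / (m−1)) · R^{N(1−m)} + 2^{k−1} M² χ · R^k / k. In particular, if m > m_c := 1 − k/N then, choosing R large enough, ℱ[ρ_*] < 0. -/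
open MeasureTheory

noncomputable section

/-- The free energy functional `ℱ[ρ] = 1/(m-1) ∫ ρ^m + χ/(2k) ∬ |x-y|^k ρ(x) ρ(y)`. -/
def freeEnergy (N : ℕ) (m χ k : ℝ) (ρ : EuclideanSpace ℝ (Fin N) → ℝ) : ℝ :=
  (1 / (m - 1)) * (∫ x, ρ x ^ m) +
    (χ / (2 * k)) * (∫ x, ∫ y, ‖x - y‖ ^ k * ρ x * ρ y)

/-- The surface area `σ_N = 2 π^{N/2} / Γ(N/2)` of the unit sphere in `ℝ^N`. -/
def sphereArea (N : ℕ) : ℝ := 2 * Real.pi ^ ((N : ℝ) / 2) / Real.Gamma ((N : ℝ) / 2)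

/-- The normalised characteristic function of the ball of radius `R` with mass `M`. -/
def rhoStar (N : ℕ) (M R : ℝ) : EuclideanSpace ℝ (Fin N) → ℝ := fun x =>
  (Metric.closedBall (0 : EuclideanSpace ℝ (Fin N)) R).indicator
    (fun _ => M * N / (sphereArea N * R ^ (N : ℝ))) x

/-! On the ball `B` of radius `R`, `ρ_*` is the constant `c` with `c |B| = M`, so its diffusion
term is exactly `|B| c^m / (m - 1)`. For the interaction term, `|x - y| ≤ 2R` on `B × B` and
`k < 0` give `|x - y|^k ≥ (2R)^k` off the diagonal, hence `∬ ≥ (2R)^k M²`, and the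
coefficient `χ / (2k)` is negative. The analytic input is the local integrability of `|x|^k`
for `k > -N`, without which the Bochner integrals would take the junk value `0`.
For `m > 1 - k/N` the first term decays like `R^{N(1-m)}`, strictly faster than `R^k`, so the
bound is negative for large `R`. -/

open Metric Set Filter Module Topology

theorem norm_sub_le_two_mul {E : Type*} [SeminormedAddCommGroup E] {R : ℝ} {x y : E}
    (hx : x ∈ closedBall 0 R) (hy : y ∈ closedBall 0 R) : ‖x - y‖ ≤ 2 * R := by
  rw [mem_closedBall_zero_iff] at hx hy
  linarith [norm_sub_le x y]

theorem norm_sub_rpow_eq_indicator {E : Type*} [SeminormedAddCommGroup E] {k R : ℝ} {x y : E}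
    (hx : x ∈ closedBall 0 R) (hy : y ∈ closedBall 0 R) :
    ‖x - y‖ ^ k = (closedBall (0 : E) (2 * R)).indicator (‖·‖ ^ k) (x - y) := by
  rw [indicator_of_mem (mem_closedBall_zero_iff.2 (norm_sub_le_two_mul hx hy))]

theorem integral_indicator_const_rpow {α : Type*} [MeasurableSpace α] {μ : Measure α}
    {s : Set α} (hs : MeasurableSet s) (c : ℝ) {m : ℝ} (hm : m ≠ 0) :
    ∫ x, s.indicator (fun _ => c) x ^ m ∂μ = μ.real s * c ^ m := by
  have : (fun x => s.indicator (fun _ => c) x ^ m) = s.indicator (fun _ => c ^ m) :=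
    funext fun x => by by_cases hx : x ∈ s <;> simp [hx, Real.zero_rpow hm]
  rw [this, integral_indicator_const _ hs, smul_eq_mul]

theorem integral_integral_mul_indicator_mul_indicator {α : Type*} [MeasurableSpace α]
    {μ : Measure α} (K : α → α → ℝ) {s : Set α} (hs : MeasurableSet s) (c : ℝ) :
    ∫ x, ∫ y, K x y * s.indicator (fun _ => c) x * s.indicator (fun _ => c) y ∂μ ∂μ =
      c ^ 2 * ∫ x in s, ∫ y in s, K x y ∂μ ∂μ := by
  have inner (x : α) :
      ∫ y, K x y * s.indicator (fun _ => c) x * s.indicator (fun _ => c) y ∂μ =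
        s.indicator (fun x => c ^ 2 * ∫ y in s, K x y ∂μ) x := by
    by_cases hx : x ∈ s
    · have : ∀ y, K x y * s.indicator (fun _ => c) x * s.indicator (fun _ => c) y =
          s.indicator (fun y => c ^ 2 * K x y) y := fun y => by
        by_cases hy : y ∈ s
        · simp only [indicator_of_mem hx, indicator_of_mem hy]; ring
        · simp [hy]
      simp_rw [this, integral_indicator hs, integral_const_mul, indicator_of_mem hx]
    · simp [hx]
  simp_rw [inner, integral_indicator hs, integral_const_mul]

section RieszKernel

variable {E : Type*} [NormedAddCommGroup E] [NormedSpace ℝ E] [FiniteDimensional ℝ E]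
  [MeasurableSpace E] [BorelSpace E] {μ : Measure E} {k R : ℝ}
  {s : Set E} {x : E}

theorem locallyIntegrable_norm_rpow [μ.IsAddHaarMeasure] (hd : 1 ≤ finrank ℝ E)
    (hk : -(finrank ℝ E : ℝ) < k) :
    LocallyIntegrable (fun x : E => ‖x‖ ^ k) μ :=
  locallyIntegrable_of_norm_le_rpow (C := 1) (α := -k) hd (by linarith)
    (ae_of_all _ fun x => by rw [neg_neg, one_mul, Real.norm_of_nonneg (by positivity)])
    (continuous_norm.measurable.pow_const k).aestronglyMeasurable

theorem integrable_indicator_closedBall_norm_rpow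
    (hK : LocallyIntegrable (fun x : E => ‖x‖ ^ k) μ) (r : ℝ) :
    Integrable ((closedBall (0 : E) r).indicator (‖·‖ ^ k)) μ :=
  (integrable_indicator_iff measurableSet_closedBall).2
    (hK.integrableOn_isCompact (isCompact_closedBall 0 r))

variable [μ.IsAddHaarMeasure]

theorem integrableOn_norm_sub_rpow (hK : LocallyIntegrable (fun x : E => ‖x‖ ^ k) μ)
    (hs : MeasurableSet s) (hx : x ∈ closedBall 0 R) (hsR : s ⊆ closedBall 0 R) :
    IntegrableOn (fun y => ‖x - y‖ ^ k) s μ :=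
  ((integrable_indicator_closedBall_norm_rpow hK (2 * R)).comp_sub_left x).integrableOn.congr_fun
    (fun _ hy => (norm_sub_rpow_eq_indicator hx (hsR hy)).symm) hs

theorem setIntegral_norm_sub_rpow_le (hK : LocallyIntegrable (fun x : E => ‖x‖ ^ k) μ)
    (hs : MeasurableSet s) (hx : x ∈ closedBall 0 R) (hsR : s ⊆ closedBall 0 R) :
    ∫ y in s, ‖x - y‖ ^ k ∂μ ≤ ∫ z in closedBall 0 (2 * R), ‖z‖ ^ k ∂μ := by
  set h := (closedBall (0 : E) (2 * R)).indicator (‖·‖ ^ k)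
  have hh : 0 ≤ h := indicator_nonneg fun z _ => by positivity
  calc ∫ y in s, ‖x - y‖ ^ k ∂μ = ∫ y in s, h (x - y) ∂μ :=
        setIntegral_congr_fun hs fun y hy => norm_sub_rpow_eq_indicator hx (hsR hy)
    _ ≤ ∫ y, h (x - y) ∂μ :=
        setIntegral_le_integral ((integrable_indicator_closedBall_norm_rpow hK _).comp_sub_left x)
          (ae_of_all _ fun y => hh (x - y))
    _ = ∫ z in closedBall 0 (2 * R), ‖z‖ ^ k ∂μ := by
        rw [integral_sub_left_eq_self h μ x, integral_indicator measurableSet_closedBall]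

theorem mul_le_setIntegral_norm_sub_rpow [NullSingletonClass μ]
    (hK : LocallyIntegrable (fun x : E => ‖x‖ ^ k) μ) (hk : k ≤ 0) (hs : MeasurableSet s)
    (hx : x ∈ closedBall 0 R) (hsR : s ⊆ closedBall 0 R) :
    μ.real s * (2 * R) ^ k ≤ ∫ y in s, ‖x - y‖ ^ k ∂μ := by
  have hle : ∀ᵐ y ∂μ.restrict s, (2 * R) ^ k ≤ ‖x - y‖ ^ k := by
    filter_upwards [ae_restrict_mem hs, ae_restrict_of_ae (μ.ae_ne x)] with y hy hyx
    exact Real.rpow_le_rpow_of_nonpos (norm_pos_iff.2 (sub_ne_zero.2 hyx.symm))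
      (norm_sub_le_two_mul hx (hsR hy)) hk
  have := setIntegral_mono_ae_restrict
    (integrableOn_const ((measure_mono hsR).trans_lt measure_closedBall_lt_top).ne)
    (integrableOn_norm_sub_rpow hK hs hx hsR) hle
  rwa [setIntegral_const, smul_eq_mul] at this

theorem aestronglyMeasurable_setIntegral_norm_sub_rpow (s : Set E) :
    AEStronglyMeasurable (fun x => ∫ y in s, ‖x - y‖ ^ k ∂μ) μ :=
  ((continuous_fst.sub continuous_snd).norm.measurable.pow_const k).aestronglyMeasurable
    |>.integral_prod_right' (μ := μ) (ν := μ.restrict s)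

theorem integrableOn_setIntegral_norm_sub_rpow
    (hK : LocallyIntegrable (fun x : E => ‖x‖ ^ k) μ)
    (hs : MeasurableSet s) (hsR : s ⊆ closedBall 0 R) :
    IntegrableOn (fun x => ∫ y in s, ‖x - y‖ ^ k ∂μ) s μ := by
  refine Measure.integrableOn_of_bounded (M := ∫ z in closedBall 0 (2 * R), ‖z‖ ^ k ∂μ)
    ((measure_mono hsR).trans_lt measure_closedBall_lt_top).ne
    (aestronglyMeasurable_setIntegral_norm_sub_rpow s) ?_
  filter_upwards [ae_restrict_mem hs] with x hx
  rw [Real.norm_of_nonneg (setIntegral_nonneg hs fun y _ => by positivity)]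
  exact setIntegral_norm_sub_rpow_le hK hs (hsR hx) hsR

theorem rpow_mul_sq_le_integral_integral_norm_sub_rpow [NullSingletonClass μ]
    (hK : LocallyIntegrable (fun x : E => ‖x‖ ^ k) μ) (hk : k ≤ 0) (hs : MeasurableSet s)
    (hsR : s ⊆ closedBall 0 R) :
    (2 * R) ^ k * μ.real s ^ 2 ≤ ∫ x in s, ∫ y in s, ‖x - y‖ ^ k ∂μ ∂μ := by
  have := setIntegral_ge_of_const_le hs ((measure_mono hsR).trans_lt measure_closedBall_lt_top).ne
    (fun x hx => mul_le_setIntegral_norm_sub_rpow hK hk hs (hsR hx) hsR)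
    (integrableOn_setIntegral_norm_sub_rpow hK hs hsR)
  rw [smul_eq_mul] at this
  linarith

end RieszKernel

theorem sphereArea_pos {N : ℕ} (hN : 1 ≤ N) : 0 < sphereArea N := by
  have : 0 < Real.Gamma ((N : ℝ) / 2) := Real.Gamma_pos_of_pos (by positivity)
  unfold sphereArea
  positivity

theorem volume_real_closedBall_eq_sphereArea {N : ℕ} (hN : 1 ≤ N) {R : ℝ} (hR : 0 ≤ R) :
    volume.real (closedBall (0 : EuclideanSpace ℝ (Fin N)) R) =
      sphereArea N * R ^ (N : ℝ) / N := by
  have : Nonempty (Fin N) := ⟨⟨0, hN⟩⟩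
  have hN0 : (N : ℝ) / 2 ≠ 0 := by positivity
  have hsqrt : √Real.pi ^ N = Real.pi ^ ((N : ℝ) / 2) := by
    rw [Real.sqrt_eq_rpow, ← Real.rpow_natCast, ← Real.rpow_mul Real.pi_pos.le]
    ring_nf
  rw [measureReal_def, EuclideanSpace.volume_closedBall, Fintype.card_fin, ENNReal.toReal_mul,
    ENNReal.toReal_pow, ENNReal.toReal_ofReal hR, ENNReal.toReal_ofReal (by positivity), hsqrt,
    Real.Gamma_add_one hN0, Real.rpow_natCast, sphereArea]
  field_simp

theorem rhoStar_eq_indicator {N : ℕ} (hN : 1 ≤ N) (M : ℝ) {R : ℝ} (hR : 0 ≤ R) :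
    rhoStar N M R = (closedBall 0 R).indicator
      (fun _ => M / volume.real (closedBall (0 : EuclideanSpace ℝ (Fin N)) R)) := by
  rw [volume_real_closedBall_eq_sphereArea hN hR, div_div_eq_mul_div]
  rfl

theorem integral_rhoStar_rpow {N : ℕ} (hN : 1 ≤ N) {m M R : ℝ} (hm : m ≠ 0) (hM : 0 ≤ M)
    (hR : 0 < R) :
    ∫ x, rhoStar N M R x ^ m =
      M ^ m * (N : ℝ) ^ (m - 1) * sphereArea N ^ (1 - m) * R ^ ((N : ℝ) * (1 - m)) := by
  have hσ := sphereArea_pos hN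
  have hN0 : (0 : ℝ) < N := by exact_mod_cast hN
  rw [rhoStar_eq_indicator hN M hR.le,
    integral_indicator_const_rpow measurableSet_closedBall _ hm,
    volume_real_closedBall_eq_sphereArea hN hR.le, Real.div_rpow hM (by positivity),
    Real.div_rpow (by positivity) hN0.le, Real.mul_rpow hσ.le (by positivity),
    ← Real.rpow_mul hR.le, Real.rpow_sub_one hN0.ne', Real.rpow_sub hσ, Real.rpow_one, mul_sub,
    mul_one, Real.rpow_sub hR]
  field_simp

theorem rpow_mul_sq_le_integral_integral_rhoStar {N : ℕ} (hN : 1 ≤ N) {k M R : ℝ}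
    (hk₁ : -(N : ℝ) < k) (hk₂ : k ≤ 0) (hR : 0 < R) :
    (2 * R) ^ k * M ^ 2 ≤ ∫ x, ∫ y, ‖x - y‖ ^ k * rhoStar N M R x * rhoStar N M R y := by
  have : Nontrivial (EuclideanSpace ℝ (Fin N)) :=
    Module.nontrivial_of_finrank_pos (R := ℝ) (by rw [finrank_euclideanSpace_fin]; omega)
  set B := closedBall (0 : EuclideanSpace ℝ (Fin N)) R
  have hV : 0 < volume.real B := by
    rw [volume_real_closedBall_eq_sphereArea hN hR.le]
    have := sphereArea_pos hN
    positivity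
  rw [rhoStar_eq_indicator hN M hR.le, integral_integral_mul_indicator_mul_indicator
    (fun x y => ‖x - y‖ ^ k) measurableSet_closedBall]
  calc (2 * R) ^ k * M ^ 2 = (M / volume.real B) ^ 2 * ((2 * R) ^ k * volume.real B ^ 2) := by
        field_simp
    _ ≤ _ := by
        gcongr
        exact rpow_mul_sq_le_integral_integral_norm_sub_rpow
          (locallyIntegrable_norm_rpow (by simpa using hN) (by simpa using hk₁)) hk₂
          measurableSet_closedBall (subset_refl B)

theorem freeEnergy_rhoStar_le {N : ℕ} (hN : 1 ≤ N) {χ k m M R : ℝ} (hχ : 0 ≤ χ)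
    (hk₁ : -(N : ℝ) < k) (hk₂ : k < 0) (hm : 1 < m) (hM : 0 ≤ M) (hR : 0 < R) :
    freeEnergy N m χ k (rhoStar N M R) ≤
      (M ^ m * (N : ℝ) ^ (m - 1) * sphereArea N ^ (1 - m) / (m - 1)) * R ^ ((N : ℝ) * (1 - m)) +
        2 ^ (k - 1) * M ^ (2 : ℕ) * χ * R ^ k / k := by
  have hcoef : χ / (2 * k) ≤ 0 := div_nonpos_of_nonneg_of_nonpos hχ (by linarith)
  have hint : χ / (2 * k) * ((2 * R) ^ k * M ^ 2) = 2 ^ (k - 1) * M ^ 2 * χ * R ^ k / k := by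
    rw [Real.mul_rpow zero_le_two hR.le, Real.rpow_sub_one two_ne_zero]
    field_simp
  rw [freeEnergy, integral_rhoStar_rpow hN (by linarith) hM hR, ← hint]
  have := mul_le_mul_of_nonpos_left
    (rpow_mul_sq_le_integral_integral_rhoStar (M := M) hN hk₁ hk₂.le hR) hcoef
  exact (add_le_add le_rfl this).trans_eq (by ring)

theorem eventually_mul_rpow_add_mul_rpow_neg {a b p q : ℝ} (hb : b < 0) (hpq : p < q) :
    ∀ᶠ R in atTop, a * R ^ p + b * R ^ q < 0 := by
  have hlim : Tendsto (fun R : ℝ => a * R ^ (p - q) + b) atTop (𝓝 (a * 0 + b)) := by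
    have := tendsto_rpow_neg_atTop (sub_pos.2 hpq)
    rw [neg_sub] at this
    exact (this.const_mul a).add_const b
  rw [mul_zero, zero_add] at hlim
  filter_upwards [hlim.eventually (gt_mem_nhds hb), eventually_gt_atTop 0] with R hR hR0
  calc a * R ^ p + b * R ^ q = R ^ q * (a * R ^ (p - q) + b) := by
        rw [Real.rpow_sub hR0]; field_simp
    _ < 0 := mul_neg_of_pos_of_neg (Real.rpow_pos_of_pos hR0 q) hR

/-- Energy bound for the normalised characteristic function of a ball, and negativity
of the free energy for large radii in the diffusion-dominated regime. -/
theorem freeEnergy_indicator_bound (N : ℕ) (hN : 1 ≤ N) (χ k m M : ℝ) (hχ : 0 < χ)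
    (hk₁ : -(N : ℝ) < k) (hk₂ : k < 0) (hm : 1 < m) (hM : 0 < M) :
    (∀ R : ℝ, 0 < R →
      freeEnergy N m χ k (rhoStar N M R) ≤
        (M ^ m * (N : ℝ) ^ (m - 1) * sphereArea N ^ (1 - m) / (m - 1)) *
            R ^ ((N : ℝ) * (1 - m)) +
          2 ^ (k - 1) * M ^ (2 : ℕ) * χ * R ^ k / k) ∧
    (1 - k / N < m → ∃ R : ℝ, 0 < R ∧ freeEnergy N m χ k (rhoStar N M R) < 0) := by
  refine ⟨fun R hR => freeEnergy_rhoStar_le hN hχ.le hk₁ hk₂ hm hM.le hR, fun hmc => ?_⟩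
  have hexp : (N : ℝ) * (1 - m) < k := by
    have hN0 : (0 : ℝ) < N := by exact_mod_cast hN
    rw [sub_lt_comm, lt_div_iff₀ hN0] at hmc
    linarith
  have hb : 2 ^ (k - 1) * M ^ 2 * χ / k < 0 := div_neg_of_pos_of_neg (by positivity) hk₂
  obtain ⟨R, hneg, hR⟩ := ((eventually_mul_rpow_add_mul_rpow_neg
    (a := M ^ m * (N : ℝ) ^ (m - 1) * sphereArea N ^ (1 - m) / (m - 1)) hb hexp).and
    (eventually_gt_atTop 0)).exists
  refine ⟨R, hR, (freeEnergy_rhoStar_le hN hχ.le hk₁ hk₂ hm hM.le hR).trans_lt ?_⟩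
  rwa [div_mul_eq_mul_div _ k (R ^ k)] at hneg
end
end

section
/- Let N ≥ 2 and k ∈ (−N, 1−N). There exists a constant C₂ > 0 depending only on k and N such that: for every R > 0 and every measurable ρ : ℝ^N → ℝ with ρ ≥ 0 a.e., ∫_{ℝ^N} ρ = 1, ρ radially symmetric (ρ(x) = f(|x|) for some f : [0,∞) → [0,∞)), and ρ = 0 a.e. outside the ball B_R of radius R centered at the origin, one has ∫_{ℝ^N} |x−y|^k ρ(y) dy ≤ C₂ · ((|x|+R)/(|x|−R))^{1−k−N} · |x|^k for all x ∈ ℝ^N with |x| > R. -/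
open MeasureTheory Metric Module
open scoped NNReal ENNReal

/-! For `x` outside the support, the Riesz potential is controlled by the `ρ`-mass of the balls
`B(x, r)`, and radial symmetry makes this mass small. A maximal `2r`-separated set on the sphere
of radius `|x|` has `n` points with `n (3r)^N ≥ r |x|^(N-1)`, because its `3r`-balls cover the
shell `|x| ≤ |z| ≤ |x| + r`; the `r`-balls around these points are disjoint and, by a reflection,
all carry the mass of `B(x, r)`, so `ρ(B(x, r)) ≤ 1 / n ≤ 3^N (r / |x|)^(N-1)`. Cutting space into
the dyadic shells `2^j a ≤ |x - y| < 2^(j+1) a`, with `a = |x| - R`, bounds the potential by a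
geometric series of ratio `2^(k + N - 1) < 1`, whose sum is `≲ a^(k + N - 1) |x|^(1 - N)`. -/

theorem IsCompact.exists_finset_separated_cover {X : Type*} [PseudoMetricSpace X] {s : Set X}
    (hs : IsCompact s) {ε : ℝ} (hε : 0 < ε) :
    ∃ C : Finset X, ↑C ⊆ s ∧ (C : Set X).Pairwise (fun p q => ε < dist p q) ∧
      ∀ z ∈ s, ∃ p ∈ C, dist z p ≤ ε := by
  set η : ℝ≥0 := (ε / 2).toNNReal
  have hη : ((2 * η : ℝ≥0) : ℝ≥0∞) = ENNReal.ofReal ε := by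
    rw [ENNReal.ofReal, ← Real.toNNReal_ofNat, ← Real.toNNReal_mul zero_le_two]; congr 3; ring
  obtain ⟨N, -, hNfin, hN⟩ := exists_finite_isCover_of_isCompact (ε := η) (by simpa [η]) hs
  have hpack : packingNumber (2 * η) s ≠ ⊤ :=
    ((packingNumber_two_mul_le_externalCoveringNumber η s).trans
      hN.externalCoveringNumber_le_encard).trans_lt hNfin.encard_lt_top |>.ne
  have hfin : (maximalSeparatedSet (2 * η) s).Finite := by
    rw [← Set.encard_ne_top_iff, encard_maximalSeparatedSet hpack]; exact hpack
  refine ⟨hfin.toFinset, by simpa using maximalSeparatedSet_subset, fun p hp q hq hpq => ?_,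
    fun z hz => ?_⟩
  · have := isSeparated_maximalSeparatedSet (by simpa using hp) (by simpa using hq) hpq
    rwa [hη, edist_dist, ENNReal.ofReal_lt_ofReal_iff_of_nonneg hε.le] at this
  · obtain ⟨p, hp, hzp⟩ := isCover_maximalSeparatedSet hpack hz
    refine ⟨p, by simpa using hp, ?_⟩
    change edist z p ≤ _ at hzp
    rwa [hη, edist_dist, ENNReal.ofReal_le_ofReal_iff hε.le] at hzp

theorem closedBall_subset_biUnion_closedBall_union_closedBall {E : Type*}
    [NormedAddCommGroup E] [NormedSpace ℝ E] {C : Finset E} {t δ : ℝ} (ht : 0 ≤ t)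
    (hC : ∀ z ∈ sphere (0 : E) t, ∃ p ∈ C, dist z p ≤ 2 * δ) :
    closedBall (0 : E) (t + δ) ⊆ (⋃ p ∈ C, closedBall p (3 * δ)) ∪ closedBall 0 t := by
  intro z hz
  rw [mem_closedBall_zero_iff] at hz
  rcases le_or_gt ‖z‖ t with hzt | hzt
  · exact Or.inr (mem_closedBall_zero_iff.2 hzt)
  have hz0 : 0 < ‖z‖ := ht.trans_lt hzt
  set w := (t / ‖z‖) • z
  have hw : w ∈ sphere (0 : E) t := by
    rw [mem_sphere_zero_iff_norm, norm_smul, Real.norm_of_nonneg (by positivity),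
      div_mul_cancel₀ _ hz0.ne']
  have hzw : dist z w = ‖z‖ - t := by
    rw [dist_eq_norm, show z - w = (1 - t / ‖z‖) • z by simp [w, sub_smul], norm_smul,
      Real.norm_of_nonneg (by rw [sub_nonneg, div_le_one hz0]; exact hzt.le), sub_mul, one_mul,
      div_mul_cancel₀ _ hz0.ne']
  obtain ⟨p, hp, hwp⟩ := hC w hw
  refine Or.inl (Set.mem_iUnion₂.2 ⟨p, hp, ?_⟩)
  rw [mem_closedBall]
  linarith [dist_triangle z w p]

section Dyadic

variable {α : Type*} [PseudoMetricSpace α] [MeasurableSpace α] {μ : Measure α} {ρ : α → ℝ}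
  {x : α} {k : ℝ}

theorem integrable_rpow_dist_mul [OpensMeasurableSpace α] (hρ : Integrable ρ μ) {a : ℝ}
    (ha : 0 < a) (hk : k ≤ 0) (hvanish : ∀ᵐ y ∂μ, dist x y < a → ρ y = 0) :
    Integrable (fun y => dist x y ^ k * ρ y) μ := by
  refine (hρ.norm.const_mul (a ^ k)).mono'
    (((continuous_const.dist continuous_id).measurable.pow_const k).aestronglyMeasurable.mul
      hρ.aestronglyMeasurable) ?_
  filter_upwards [hvanish] with y hy
  rw [norm_mul, Real.norm_of_nonneg (Real.rpow_nonneg dist_nonneg k)]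
  by_cases hya : dist x y < a
  · simp [hy hya]
  · exact mul_le_mul_of_nonneg_right (Real.rpow_le_rpow_of_nonpos ha (not_lt.1 hya) hk)
      (norm_nonneg _)

theorem setIntegral_rpow_dist_mul_le (hρ : Integrable ρ μ) (hρ0 : 0 ≤ᵐ[μ] ρ) {s : Set α}
    (hs : MeasurableSet s) {r : ℝ} (hr : 0 < r) (hk : k ≤ 0) (hsr : ∀ y ∈ s, r ≤ dist x y) :
    ∫ y in s, dist x y ^ k * ρ y ∂μ ≤ r ^ k * ∫ y in s, ρ y ∂μ := by
  rw [← integral_const_mul]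
  refine integral_mono_of_nonneg ?_ (hρ.const_mul _).integrableOn ?_
  · filter_upwards [ae_restrict_of_ae hρ0] with y hy
    exact mul_nonneg (Real.rpow_nonneg dist_nonneg k) hy
  · filter_upwards [ae_restrict_of_ae hρ0, ae_restrict_mem hs] with y hy hys
    exact mul_le_mul_of_nonneg_right (Real.rpow_le_rpow_of_nonpos hr (hsr y hys) hk) hy

theorem integral_rpow_dist_mul_le_of_setIntegral_ball_le [OpensMeasurableSpace α]
    (hρ : Integrable ρ μ) (hρ0 : 0 ≤ᵐ[μ] ρ) {a s M : ℝ} (ha : 0 < a) (hk : k ≤ 0) (hks : k + s < 0)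
    (hvanish : ∀ᵐ y ∂μ, dist x y < a → ρ y = 0)
    (hball : ∀ r > 0, ∫ y in ball x r, ρ y ∂μ ≤ M * r ^ s) :
    ∫ y, dist x y ^ k * ρ y ∂μ ≤ 2 ^ s * M * a ^ (k + s) / (1 - 2 ^ (k + s)) := by
  set A : ℕ → Set α := fun j => (dist x ·) ⁻¹' Set.Ico (2 ^ j * a) (2 ^ (j + 1) * a)
  have hmono : Monotone fun j : ℕ => (2 : ℝ) ^ j * a := fun _ _ hij =>
    mul_le_mul_of_nonneg_right (pow_le_pow_right₀ one_le_two hij) ha.le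
  have hA_meas : ∀ j, MeasurableSet (A j) := fun j =>
    measurableSet_Ico.preimage (continuous_const.dist continuous_id).measurable
  have hA_disj : Pairwise (Function.onFun Disjoint A) := fun i j hij =>
    ((hmono.pairwise_disjoint_on_Ico_succ) hij).preimage _
  have hA_union : ⋃ j, A j = (dist x ·) ⁻¹' Set.Ici a := by
    rw [← Set.preimage_iUnion]
    have hunb : ¬BddAbove (Set.range fun j : ℕ => (2 : ℝ) ^ j * a) := by
      refine not_bddAbove_iff.2 fun r => ?_
      obtain ⟨j, hj⟩ := pow_unbounded_of_one_lt (r / a) one_lt_two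
      exact ⟨_, ⟨j, rfl⟩, (div_lt_iff₀ ha).1 hj⟩
    have hIco := iUnion_Ico_map_succ_eq_Ici (fun _ => hmono bot_le) hunb
    simp only [Order.succ_eq_add_one, Nat.bot_eq_zero, pow_zero, one_mul] at hIco
    rw [hIco]
  have hq : (0 : ℝ) ≤ 2 ^ (k + s) := Real.rpow_nonneg zero_le_two _
  have hq1 : (2 : ℝ) ^ (k + s) < 1 := Real.rpow_lt_one_of_one_lt_of_neg one_lt_two hks
  have hterm : ∀ j,
      ∫ y in A j, dist x y ^ k * ρ y ∂μ ≤ 2 ^ s * M * a ^ (k + s) * (2 ^ (k + s)) ^ j := by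
    intro j
    have h2j : (0 : ℝ) < 2 ^ j * a := by positivity
    have hpow : ((2 : ℝ) ^ j * a) ^ k * ((2 : ℝ) ^ (j + 1) * a) ^ s
        = 2 ^ s * a ^ (k + s) * (2 ^ (k + s)) ^ j := by
      rw [Real.mul_rpow (by positivity) ha.le, Real.mul_rpow (by positivity) ha.le,
        Real.rpow_add ha]
      simp only [← Real.rpow_natCast, ← Real.rpow_mul zero_le_two]
      have h2 : (2 : ℝ) ^ ((j : ℝ) * k) * 2 ^ (((j + 1 : ℕ) : ℝ) * s)
          = 2 ^ s * 2 ^ ((k + s) * j) := by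
        rw [← Real.rpow_add two_pos, ← Real.rpow_add two_pos]; push_cast; ring_nf
      linear_combination a ^ k * a ^ s * h2
    calc ∫ y in A j, dist x y ^ k * ρ y ∂μ ≤ (2 ^ j * a) ^ k * ∫ y in A j, ρ y ∂μ :=
          setIntegral_rpow_dist_mul_le hρ hρ0 (hA_meas j) h2j hk fun _ hy => hy.1
      _ ≤ (2 ^ j * a) ^ k * (M * (2 ^ (j + 1) * a) ^ s) := by
          gcongr
          refine (setIntegral_mono_set hρ.integrableOn (ae_restrict_of_ae hρ0)
            (Filter.Eventually.of_forall fun y (hy : y ∈ A j) => mem_ball'.2 hy.2)).trans ?_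
          exact hball _ (by positivity)
      _ = 2 ^ s * M * a ^ (k + s) * (2 ^ (k + s)) ^ j := by
          linear_combination M * hpow
  have hsum := hasSum_integral_iUnion hA_meas hA_disj
    (integrable_rpow_dist_mul hρ ha hk hvanish).integrableOn
  have hsupp : ∫ y, dist x y ^ k * ρ y ∂μ = ∫ y in ⋃ j, A j, dist x y ^ k * ρ y ∂μ := by
    refine (setIntegral_eq_integral_of_ae_compl_eq_zero ?_).symm
    filter_upwards [hvanish] with y hy hyA
    rw [hA_union] at hyA
    rw [hy (not_le.1 hyA), mul_zero]
  rw [hsupp, div_eq_mul_inv]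
  exact hasSum_le hterm hsum ((hasSum_geometric_of_lt_one hq hq1).mul_left _)

end Dyadic

section Radial

variable {E : Type*} [NormedAddCommGroup E] [InnerProductSpace ℝ E] [FiniteDimensional ℝ E]
  [MeasurableSpace E] [BorelSpace E]

theorem setIntegral_ball_eq_of_norm_eq {ρ : E → ℝ} {f : ℝ → ℝ} (hρ : ∀ y, ρ y = f ‖y‖)
    {x x' : E} (h : ‖x‖ = ‖x'‖) (δ : ℝ) :
    ∫ y in ball x δ, ρ y = ∫ y in ball x' δ, ρ y := by
  set e := (Submodule.span ℝ {x - x'})ᗮ.reflection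
  have hex : e x = x' := Submodule.reflection_sub h
  have hpre : e ⁻¹' ball x' δ = ball x δ := by
    ext y; simp only [Set.mem_preimage, mem_ball, ← hex, e.dist_map]
  have hρe : (fun y => ρ (e y)) = ρ := by
    funext y; rw [hρ, hρ, e.norm_map]
  calc ∫ y in ball x δ, ρ y = ∫ y in e ⁻¹' ball x' δ, ρ (e y) := by rw [hpre, hρe]
    _ = _ := e.measurePreserving.setIntegral_preimage_emb e.toHomeomorph.measurableEmbedding _ _

theorem card_mul_setIntegral_ball_le_integral {ρ : E → ℝ} {f : ℝ → ℝ} (hρ : ∀ y, ρ y = f ‖y‖)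
    (hint : Integrable ρ) (hpos : 0 ≤ᵐ[volume] ρ) {C : Finset E} {x : E} {δ : ℝ}
    (hCx : ∀ p ∈ C, ‖p‖ = ‖x‖) (hsep : (C : Set E).Pairwise fun p q => 2 * δ ≤ dist p q) :
    C.card * ∫ y in ball x δ, ρ y ≤ ∫ y, ρ y := by
  have hdisj : (C : Set E).Pairwise (Function.onFun Disjoint fun p => ball p δ) :=
    fun p hp q hq hpq => ball_disjoint_ball (by linarith [hsep hp hq hpq] : δ + δ ≤ dist p q)
  calc C.card * ∫ y in ball x δ, ρ y = ∑ p ∈ C, ∫ y in ball p δ, ρ y := by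
        rw [Finset.sum_congr rfl fun p hp => setIntegral_ball_eq_of_norm_eq hρ (hCx p hp) δ,
          Finset.sum_const, nsmul_eq_mul]
    _ = ∫ y in ⋃ p ∈ C, ball p δ, ρ y :=
        (integral_biUnion_finset C (fun _ _ => measurableSet_ball) hdisj
          fun _ _ => hint.integrableOn).symm
    _ ≤ ∫ y, ρ y := setIntegral_le_integral hint hpos

theorem add_pow_finrank_le_of_sphere_cover {C : Finset E} {t δ : ℝ} (ht : 0 ≤ t) (hδ : 0 ≤ δ)
    (hC : ∀ z ∈ sphere (0 : E) t, ∃ p ∈ C, dist z p ≤ 2 * δ) :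
    (t + δ) ^ finrank ℝ E ≤ C.card * (3 * δ) ^ finrank ℝ E + t ^ finrank ℝ E := by
  have hv : 0 < volume.real (closedBall (0 : E) 1) :=
    ENNReal.toReal_pos (measure_closedBall_pos _ _ one_pos).ne' measure_closedBall_lt_top.ne
  have hfin : volume ((⋃ p ∈ C, closedBall p (3 * δ)) ∪ closedBall (0 : E) t) ≠ ⊤ :=
    measure_union_ne_top ((measure_biUnion_finset_le _ _).trans_lt
      (ENNReal.sum_lt_top.2 fun _ _ => measure_closedBall_lt_top)).ne measure_closedBall_lt_top.ne
  have hvol :=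
    (measureReal_mono (closedBall_subset_biUnion_closedBall_union_closedBall ht hC) hfin).trans
      ((measureReal_union_le _ _).trans (add_le_add_left (measureReal_biUnion_finset_le _ _) _))
  simp only [Measure.addHaar_real_closedBall' _ _ (by positivity : 0 ≤ 3 * δ),
    Measure.addHaar_real_closedBall' _ _ (add_nonneg ht hδ),
    Measure.addHaar_real_closedBall' _ _ ht,
    Finset.sum_const, nsmul_eq_mul] at hvol
  nlinarith

theorem setIntegral_ball_le_of_radial {ρ : E → ℝ} {f : ℝ → ℝ} (hρ : ∀ y, ρ y = f ‖y‖)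
    (hint : Integrable ρ) (hpos : 0 ≤ᵐ[volume] ρ) {x : E} (hx : x ≠ 0) {δ : ℝ} (hδ : 0 < δ) :
    ∫ y in ball x δ, ρ y ≤ 3 ^ finrank ℝ E * (δ / ‖x‖) ^ (finrank ℝ E - 1) * ∫ y, ρ y := by
  have : Nontrivial E := ⟨⟨x, 0, hx⟩⟩
  obtain ⟨n, hn⟩ : ∃ n, finrank ℝ E = n + 1 := Nat.exists_eq_add_one.2 finrank_pos
  set t := ‖x‖
  have ht : 0 < t := norm_pos_iff.2 hx
  obtain ⟨C, hCs, hsep, hcov⟩ := (isCompact_sphere (0 : E) t).exists_finset_separated_cover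
    (by positivity : 0 < 2 * δ)
  have hmass := card_mul_setIntegral_ball_le_integral hρ hint hpos
    (fun p hp => mem_sphere_zero_iff_norm.1 (hCs hp)) (hsep.mono' fun _ _ h => h.le)
  have hvol := add_pow_finrank_le_of_sphere_cover ht.le hδ.le hcov
  have hgrowth : t ^ (n + 1) + δ * t ^ n ≤ (t + δ) ^ (n + 1) :=
    calc t ^ (n + 1) + δ * t ^ n = t ^ n * (t + δ) := by ring
      _ ≤ (t + δ) ^ n * (t + δ) := by gcongr; linarith
      _ = _ := (pow_succ _ _).symm
  rw [hn] at hvol ⊢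
  set m := ∫ y in ball x δ, ρ y
  set I := ∫ y, ρ y
  have hm : 0 ≤ m := setIntegral_nonneg_of_ae_restrict (ae_restrict_of_ae hpos)
  have hcount : δ * t ^ n ≤ C.card * (3 * δ) ^ (n + 1) := by linarith
  have hmδ : m * t ^ n * δ ≤ 3 ^ (n + 1) * δ ^ n * I * δ :=
    calc m * t ^ n * δ = m * (δ * t ^ n) := by ring
      _ ≤ m * (C.card * (3 * δ) ^ (n + 1)) := by gcongr
      _ = C.card * m * (3 * δ) ^ (n + 1) := by ring
      _ ≤ I * (3 * δ) ^ (n + 1) := by gcongr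
      _ = 3 ^ (n + 1) * δ ^ n * I * δ := by ring
  rw [Nat.add_sub_cancel, div_pow, mul_div_assoc', div_mul_eq_mul_div, le_div_iff₀ (by positivity)]
  exact le_of_mul_le_mul_right hmδ hδ

theorem integral_rpow_norm_sub_mul_le_of_radial {ρ : E → ℝ} {f : ℝ → ℝ}
    (hρ : ∀ y, ρ y = f ‖y‖) (hint : Integrable ρ) (hpos : 0 ≤ᵐ[volume] ρ) {x : E} (hx : x ≠ 0)
    {a k : ℝ} (ha : 0 < a) (hks : k + ((finrank ℝ E : ℝ) - 1) < 0)
    (hvanish : ∀ᵐ y ∂volume, dist x y < a → ρ y = 0) :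
    ∫ y, ‖x - y‖ ^ k * ρ y ≤
      2 ^ ((finrank ℝ E : ℝ) - 1) * 3 ^ finrank ℝ E * ‖x‖ ^ (-((finrank ℝ E : ℝ) - 1)) *
        a ^ (k + ((finrank ℝ E : ℝ) - 1)) / (1 - 2 ^ (k + ((finrank ℝ E : ℝ) - 1))) *
        ∫ y, ρ y := by
  have : Nontrivial E := ⟨⟨x, 0, hx⟩⟩
  have hn : (1 : ℝ) ≤ finrank ℝ E := by exact_mod_cast finrank_pos
  have hball : ∀ r > 0, ∫ y in ball x r, ρ y ≤
      (3 ^ finrank ℝ E * ‖x‖ ^ (-((finrank ℝ E : ℝ) - 1)) * ∫ y, ρ y) *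
        r ^ ((finrank ℝ E : ℝ) - 1) := by
    intro r hr
    refine (setIntegral_ball_le_of_radial hρ hint hpos hx hr).trans_eq ?_
    rw [← Real.rpow_natCast (r / ‖x‖), Nat.cast_sub finrank_pos, Nat.cast_one,
      Real.div_rpow hr.le (norm_nonneg x), div_eq_mul_inv, ← Real.rpow_neg (norm_nonneg x)]
    ring
  simp only [← dist_eq_norm]
  refine (integral_rpow_dist_mul_le_of_setIntegral_ball_le hint hpos ha (by linarith) hks
    hvanish hball).trans_eq ?_
  ring

end Radial

theorem rpow_neg_mul_rpow_add_le {a t T k s : ℝ} (ha : 0 < a) (ht : 0 < t) (htT : t ≤ T)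
    (hks : k + s ≤ 0) : t ^ (-s) * a ^ (k + s) ≤ (T / a) ^ (-(k + s)) * t ^ k := by
  calc t ^ (-s) * a ^ (k + s) = (t / a) ^ (-(k + s)) * t ^ k := by
        rw [Real.div_rpow ht.le ha.le, Real.rpow_neg ha.le, div_inv_eq_mul, neg_add,
          Real.rpow_add ht, Real.rpow_neg ht.le k]
        field_simp
    _ ≤ (T / a) ^ (-(k + s)) * t ^ k := by
        gcongr
        linarith

theorem riesz_potential_estimate_singular_general (N : ℕ) (k : ℝ)
    (hk₂ : k < 1 - (N : ℝ)) :
    ∃ C₂ : ℝ, 0 < C₂ ∧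
      ∀ R : ℝ, 0 < R →
      ∀ ρ : EuclideanSpace ℝ (Fin N) → ℝ, Measurable ρ →
        (∀ᵐ x ∂volume, 0 ≤ ρ x) → (∫ x, ρ x) = 1 →
        (∃ f : ℝ → ℝ, (∀ r ∈ Set.Ici (0 : ℝ), 0 ≤ f r) ∧ ∀ x, ρ x = f ‖x‖) →
        (∀ᵐ x ∂volume, x ∉ Metric.closedBall (0 : EuclideanSpace ℝ (Fin N)) R → ρ x = 0) →
        ∀ x : EuclideanSpace ℝ (Fin N), R < ‖x‖ →
          (∫ y, ‖x - y‖ ^ k * ρ y) ≤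
            C₂ * ((‖x‖ + R) / (‖x‖ - R)) ^ (1 - k - N) * ‖x‖ ^ k := by
  set s : ℝ := N - 1
  have hks : k + s < 0 := by simp only [s]; linarith
  have hq1 : (2 : ℝ) ^ (k + s) < 1 := Real.rpow_lt_one_of_one_lt_of_neg one_lt_two hks
  have hC : 0 < (2 : ℝ) ^ s * 3 ^ N / (1 - 2 ^ (k + s)) := div_pos (by positivity) (sub_pos.2 hq1)
  refine ⟨_, hC, ?_⟩
  rintro R hR ρ - hpos hmass ⟨f, -, hf⟩ hsupp x hx
  set t := ‖x‖
  have ht : 0 < t := hR.trans hx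
  have hint : Integrable ρ := by
    by_contra h
    simp [integral_undef h] at hmass
  have hvanish : ∀ᵐ y ∂volume, dist x y < t - R → ρ y = 0 := by
    filter_upwards [hsupp] with y hy hxy
    refine hy fun hyR => ?_
    rw [mem_closedBall_zero_iff] at hyR
    linarith [norm_sub_norm_le x y, dist_eq_norm x y]
  have key := integral_rpow_norm_sub_mul_le_of_radial hf hint hpos (norm_pos_iff.1 ht)
    (sub_pos.2 hx) (by rwa [finrank_euclideanSpace_fin]) hvanish
  rw [finrank_euclideanSpace_fin, hmass, mul_one] at key
  calc ∫ y, ‖x - y‖ ^ k * ρ y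
      ≤ 2 ^ s * 3 ^ N / (1 - 2 ^ (k + s)) * (t ^ (-s) * (t - R) ^ (k + s)) := key.trans_eq (by ring)
    _ ≤ 2 ^ s * 3 ^ N / (1 - 2 ^ (k + s)) * (((t + R) / (t - R)) ^ (-(k + s)) * t ^ k) :=
        mul_le_mul_of_nonneg_left
          (rpow_neg_mul_rpow_add_le (sub_pos.2 hx) ht (le_add_of_nonneg_right hR.le) hks.le) hC.le
    _ = _ := by rw [show 1 - k - (N : ℝ) = -(k + s) by ring]; ring

/-- Riesz potential estimate outside the support for radially symmetric compactly
supported probability densities, in the singular range `k ∈ (-N, 1-N)`. -/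
theorem riesz_potential_estimate_singular (N : ℕ) (hN : 2 ≤ N) (k : ℝ)
    (hk₁ : -(N : ℝ) < k) (hk₂ : k < 1 - (N : ℝ)) :
    ∃ C₂ : ℝ, 0 < C₂ ∧
      ∀ R : ℝ, 0 < R →
      ∀ ρ : EuclideanSpace ℝ (Fin N) → ℝ, Measurable ρ →
        (∀ᵐ x ∂volume, 0 ≤ ρ x) → (∫ x, ρ x) = 1 →
        (∃ f : ℝ → ℝ, (∀ r ∈ Set.Ici (0 : ℝ), 0 ≤ f r) ∧ ∀ x, ρ x = f ‖x‖) →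
        (∀ᵐ x ∂volume, x ∉ Metric.closedBall (0 : EuclideanSpace ℝ (Fin N)) R → ρ x = 0) →
        ∀ x : EuclideanSpace ℝ (Fin N), R < ‖x‖ →
          (∫ y, ‖x - y‖ ^ k * ρ y) ≤
            C₂ * ((‖x‖ + R) / (‖x‖ - R)) ^ (1 - k - N) * ‖x‖ ^ k :=
  riesz_potential_estimate_singular_general N k hk₂
end

section
/- Let N ≥ 2 and k = 1−N. There exists a constant C₂ > 0 depending only on N such that: for every R > 0 and every measurable ρ : ℝ^N → ℝ with ρ ≥ 0 a.e., ∫_{ℝ^N} ρ = 1, ρ radially symmetric (ρ(x) = f(|x|) for some f : [0,∞) → [0,∞)), and ρ = 0 a.e. outside the ball B_R of radius R centered at the origin, one has ∫_{ℝ^N} |x−y|^{1−N} ρ(y) dy ≤ C₂ · (1 + log((|x|+R)/(|x|−R))) · |x|^{1−N} for all x ∈ ℝ^N with |x| > R. -/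
/-!
Rotations act transitively on each sphere around the origin and preserve a radial density, so
all balls `closedBall p t` with `‖p‖ = ‖x‖` carry the same mass. About `(‖x‖ / t) ^ (N - 1)` of
them can be placed disjointly on the sphere of radius `‖x‖`, hence a radial probability density
puts mass at most `(3 N t / ‖x‖) ^ (N - 1)` into `closedBall x t`. If the density lives in
`closedBall 0 R`, then `‖x - y‖` ranges over `[‖x‖ - R, ‖x‖ + R]`; splitting this range into
`1 + log₂ ((‖x‖ + R) / (‖x‖ - R))` dyadic shells around `x`, the kernel `‖x - y‖ ^ (1 - N)` times
the mass bound of the enclosing ball contributes `(6 N / ‖x‖) ^ (N - 1)` per shell.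
-/

open MeasureTheory Metric

theorem exists_sphere_points_pairwise_le_dist (n m : ℕ) {r c : ℝ} (hr : 0 ≤ r) (hc : 0 ≤ c)
    (hcm : n * (c * m) ^ 2 ≤ r ^ 2) :
    ∃ P : (Fin n → Fin (m + 1)) → EuclideanSpace ℝ (Fin (n + 1)),
      (∀ s, ‖P s‖ = r) ∧ Pairwise fun s s' => c ≤ dist (P s) (P s') := by
  let tail : (Fin n → Fin (m + 1)) → Fin n → ℝ := fun s i => c * (s i : ℕ)
  have htail : ∀ s, ∑ i, tail s i ^ 2 ≤ r ^ 2 := fun s => calc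
    ∑ i, tail s i ^ 2 ≤ ∑ _i : Fin n, (c * m) ^ 2 := by
      gcongr with i
      exact mul_le_mul_of_nonneg_left (by exact_mod_cast Nat.lt_succ_iff.1 (s i).2) hc
    _ ≤ r ^ 2 := by simpa using hcm
  let P s : EuclideanSpace ℝ (Fin (n + 1)) :=
    WithLp.toLp 2 (Fin.cons √(r ^ 2 - ∑ i, tail s i ^ 2) (tail s))
  refine ⟨P, fun s => ?_, fun s s' hss' => ?_⟩
  · rw [← sq_eq_sq₀ (norm_nonneg _) hr, EuclideanSpace.norm_sq_eq, Fin.sum_univ_succ]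
    simp only [P, Fin.cons_zero, Fin.cons_succ, Real.norm_eq_abs, sq_abs,
      Real.sq_sqrt (sub_nonneg.2 (htail s))]
    ring
  · obtain ⟨i, hi⟩ := Function.ne_iff.1 hss'
    have hsep : (1 : ℝ) ≤ |((s i : ℕ) : ℝ) - (s' i : ℕ)| := by
      have := Int.one_le_abs (sub_ne_zero.2 (Int.natCast_inj.not.2 (Fin.val_injective.ne hi)))
      exact_mod_cast this
    calc c ≤ c * |((s i : ℕ) : ℝ) - (s' i : ℕ)| := le_mul_of_one_le_right hc hsep
      _ = dist (tail s i) (tail s' i) := by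
          rw [Real.dist_eq, ← mul_sub, abs_mul, abs_of_nonneg hc]
      _ ≤ dist (P s) (P s') := by simpa [P] using PiLp.dist_apply_le (P s) (P s') i.succ

theorem measure_closedBall_eq_of_norm_eq {E : Type*} [NormedAddCommGroup E]
    [InnerProductSpace ℝ E] [MeasurableSpace E] [BorelSpace E] {μ : Measure E}
    (hμ : ∀ Q : E ≃ₗᵢ[ℝ] E, MeasurePreserving Q μ μ) {x p : E} (h : ‖x‖ = ‖p‖) (t : ℝ) :
    μ (closedBall x t) = μ (closedBall p t) := by
  obtain ⟨Q, rfl⟩ : ∃ Q : E ≃ₗᵢ[ℝ] E, Q x = p := ⟨_, Submodule.reflection_sub h⟩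
  have hQ : Q ⁻¹' closedBall (Q x) t = closedBall x t := by
    ext y
    simp only [Set.mem_preimage, mem_closedBall, LinearIsometryEquiv.dist_map]
  rw [← hQ, (hμ Q).measure_preimage measurableSet_closedBall.nullMeasurableSet]

theorem MeasureTheory.MeasurePreserving.withDensity_of_comp_eq {α : Type*} [MeasurableSpace α]
    {μ : Measure α} {T : α → α} (hT : MeasurePreserving T μ μ) {g : α → ENNReal}
    (hg : Measurable g) (hgT : g ∘ T = g) :
    MeasurePreserving T (μ.withDensity g) (μ.withDensity g) := by
  refine ⟨hT.measurable, Measure.ext fun s hs => ?_⟩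
  rw [Measure.map_apply hT.measurable hs, withDensity_apply _ (hT.measurable hs),
    withDensity_apply _ hs, ← hT.setLIntegral_comp_preimage hs hg]
  exact (congrArg _ hgT).symm

theorem MeasureTheory.isProbabilityMeasure_withDensity_ofReal {α : Type*} [MeasurableSpace α]
    {μ : Measure α} {f : α → ℝ} (hf0 : 0 ≤ᵐ[μ] f) (hf : ∫ a, f a ∂μ = 1) :
    IsProbabilityMeasure (μ.withDensity fun a => ENNReal.ofReal (f a)) := ⟨by
  rw [withDensity_apply _ MeasurableSet.univ, Measure.restrict_univ,
    ← ofReal_integral_eq_lintegral_ofReal (integrable_of_integral_eq_one hf) hf0, hf,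
    ENNReal.ofReal_one]⟩

theorem MeasureTheory.integral_withDensity_ofReal_eq_integral_mul {α : Type*}
    [MeasurableSpace α] {μ : Measure α} {f : α → ℝ} (hf : Measurable f) (hf0 : 0 ≤ᵐ[μ] f)
    (g : α → ℝ) :
    ∫ a, g a ∂μ.withDensity (fun a => ENNReal.ofReal (f a)) = ∫ a, g a * f a ∂μ := by
  rw [integral_withDensity_eq_integral_toReal_smul hf.ennreal_ofReal
    (ae_of_all _ fun _ => ENNReal.ofReal_lt_top)]
  refine integral_congr_ae ?_
  filter_upwards [hf0] with a ha
  rw [ENNReal.toReal_ofReal ha, smul_eq_mul, mul_comm]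

theorem one_add_logb_two_le (y : ℝ) : 1 + Real.logb 2 y ≤ (1 + Real.log y) / Real.log 2 := by
  have hlog2 : 1 ≤ 1 / Real.log 2 := by
    rw [le_div_iff₀ (Real.log_pos one_lt_two)]
    linarith [Real.log_two_lt_d9]
  rw [Real.logb, add_div 1]
  linarith

theorem measureReal_closedBall_le_of_isometry_invariant {n : ℕ}
    {μ : Measure (EuclideanSpace ℝ (Fin (n + 1)))} [IsFiniteMeasure μ]
    (hμ : ∀ Q : EuclideanSpace ℝ (Fin (n + 1)) ≃ₗᵢ[ℝ] EuclideanSpace ℝ (Fin (n + 1)),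
      MeasurePreserving Q μ μ)
    {x : EuclideanSpace ℝ (Fin (n + 1))} (hx : x ≠ 0) {t : ℝ} (ht : 0 < t) :
    μ.real (closedBall x t) ≤ (3 * (n + 1) * t / ‖x‖) ^ n * μ.real Set.univ := by
  have hr : 0 < ‖x‖ := norm_pos_iff.2 hx
  have hq : 0 < ‖x‖ / (3 * (n + 1) * t) := by positivity
  set m := ⌊‖x‖ / (3 * (n + 1) * t)⌋₊
  have hm : 3 * t * m * (n + 1) ≤ ‖x‖ := by
    have := Nat.floor_le hq.le
    rw [le_div_iff₀ (by positivity)] at this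
    linarith
  obtain ⟨P, hPnorm, hPsep⟩ := exists_sphere_points_pairwise_le_dist n m hr.le
    (by positivity : 0 ≤ 3 * t) (by
      have h3tm : 0 ≤ 3 * t * m := by positivity
      calc (n : ℝ) * (3 * t * m) ^ 2 ≤ (3 * t * m * (n + 1)) ^ 2 := by nlinarith
        _ ≤ ‖x‖ ^ 2 := by gcongr)
  have hdisj : Pairwise (Function.onFun Disjoint fun s => closedBall (P s) t) := fun s s' h =>
    closedBall_disjoint_closedBall (by linarith [hPsep h] : t + t < dist (P s) (P s'))
  have hcount : ((m : ℝ) + 1) ^ n * μ.real (closedBall x t) ≤ μ.real Set.univ := calc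
    ((m : ℝ) + 1) ^ n * μ.real (closedBall x t) = ∑ s, μ.real (closedBall (P s) t) := by
      have hball s : μ.real (closedBall (P s) t) = μ.real (closedBall x t) := by
        rw [measureReal_def, measureReal_def, measure_closedBall_eq_of_norm_eq hμ (hPnorm s)]
      simp [hball]
    _ = μ.real (⋃ s, closedBall (P s) t) :=
      (measureReal_iUnion_fintype hdisj fun _ => measurableSet_closedBall).symm
    _ ≤ μ.real Set.univ := measureReal_mono (Set.subset_univ _)
  have hmq : (3 * (n + 1) * t / ‖x‖)⁻¹ ≤ m + 1 := by
    rw [inv_div]; exact (Nat.lt_floor_add_one _).le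
  calc μ.real (closedBall x t)
      = (((m : ℝ) + 1) ^ n)⁻¹ * (((m : ℝ) + 1) ^ n * μ.real (closedBall x t)) := by
        field_simp
    _ ≤ (((m : ℝ) + 1) ^ n)⁻¹ * μ.real Set.univ := by gcongr
    _ ≤ (3 * (n + 1) * t / ‖x‖) ^ n * μ.real Set.univ := by
        rw [← inv_pow]
        gcongr
        exact inv_le_of_inv_le₀ (by positivity) hmq

theorem rpow_neg_le_sum_dyadic {s a d : ℝ} {J : ℕ} (hs : 0 ≤ s) (ha : 0 < a) (had : a ≤ d)
    (hdJ : d < 2 ^ (J + 1) * a) :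
    d ^ (-s) ≤ ∑ j ∈ Finset.range (J + 1),
      (2 ^ j * a) ^ (-s) * (Set.Iic (2 ^ (j + 1) * a)).indicator 1 d := by
  obtain ⟨j, hjd, hdj⟩ := exists_nat_pow_near ((one_le_div ha).2 had) one_lt_two
  rw [le_div_iff₀ ha] at hjd
  rw [div_lt_iff₀ ha] at hdj
  have hjJ : j ∈ Finset.range (J + 1) := Finset.mem_range.2 <|
    (pow_lt_pow_iff_right₀ one_lt_two).1 <| lt_of_mul_lt_mul_right (hjd.trans_lt hdJ) ha.le
  calc d ^ (-s) ≤ (2 ^ j * a) ^ (-s) :=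
        Real.rpow_le_rpow_of_nonpos (by positivity) hjd (neg_nonpos.2 hs)
    _ = (2 ^ j * a) ^ (-s) * (Set.Iic (2 ^ (j + 1) * a)).indicator 1 d := by
        rw [Set.indicator_of_mem (Set.mem_Iic.2 hdj.le), Pi.one_apply, mul_one]
    _ ≤ _ := Finset.single_le_sum
        (f := fun j => (2 ^ j * a) ^ (-s) * (Set.Iic (2 ^ (j + 1) * a)).indicator 1 d)
        (fun i _ => mul_nonneg (by positivity) (Set.indicator_nonneg (fun _ _ => zero_le_one) _))
        hjJ

theorem integral_dist_rpow_neg_le {E : Type*} [PseudoMetricSpace E] [MeasurableSpace E]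
    [OpensMeasurableSpace E] (μ : Measure E) [IsFiniteMeasure μ] (x : E) {s a b K : ℝ}
    (hs : 0 ≤ s) (ha : 0 < a) (hab : a ≤ b) (hK : 0 ≤ K)
    (hsupp : ∀ᵐ y ∂μ, dist y x ∈ Set.Icc a b)
    (hball : ∀ τ, 0 < τ → μ.real (closedBall x τ) ≤ (K * τ) ^ s) :
    ∫ y, dist y x ^ (-s) ∂μ ≤ (2 * K) ^ s * (1 + Real.logb 2 (b / a)) := by
  obtain ⟨J, hJb, hbJ⟩ := exists_nat_pow_near ((one_le_div ha).2 hab) one_lt_two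
  let B (j : ℕ) := closedBall x (2 ^ (j + 1) * a)
  let g y := ∑ j ∈ Finset.range (J + 1), (2 ^ j * a) ^ (-s) * (B j).indicator 1 y
  have hterm_int : ∀ j ∈ Finset.range (J + 1),
      Integrable (fun y => (2 ^ j * a) ^ (-s) * (B j).indicator 1 y) μ := fun j _ =>
    ((integrable_const 1).indicator measurableSet_closedBall).const_mul _
  have hdist_le : ∀ᵐ y ∂μ, dist y x ^ (-s) ≤ g y := by
    filter_upwards [hsupp] with y hy
    exact rpow_neg_le_sum_dyadic hs ha hy.1 (hy.2.trans_lt ((div_lt_iff₀ ha).1 hbJ))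
  have hterm : ∀ j : ℕ, (2 ^ j * a) ^ (-s) * μ.real (B j) ≤ (2 * K) ^ s := fun j => calc
    (2 ^ j * a) ^ (-s) * μ.real (B j) ≤ (2 ^ j * a) ^ (-s) * ((2 * K) * (2 ^ j * a)) ^ s := by
      rw [show 2 * K * (2 ^ j * a) = K * (2 ^ (j + 1) * a) by ring]
      gcongr
      exact hball _ (by positivity)
    _ = (2 * K) ^ s := by
      rw [Real.mul_rpow (x := 2 * K) (by positivity) (by positivity),
        Real.rpow_neg (by positivity)]
      field_simp
  have hint : Integrable (fun y => dist y x ^ (-s)) μ := by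
    refine (integrable_const (a ^ (-s))).mono'
      ((continuous_id.dist continuous_const).measurable.pow_const _).aestronglyMeasurable ?_
    filter_upwards [hsupp] with y hy
    rw [Real.norm_of_nonneg (Real.rpow_nonneg dist_nonneg _)]
    exact Real.rpow_le_rpow_of_nonpos ha hy.1 (neg_nonpos.2 hs)
  have hJ : (J : ℝ) ≤ Real.logb 2 (b / a) :=
    (Real.le_logb_iff_rpow_le one_lt_two (by have := ha.trans_le hab; positivity)).2
      (by rwa [Real.rpow_natCast])
  calc ∫ y, dist y x ^ (-s) ∂μ ≤ ∫ y, g y ∂μ :=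
        integral_mono_ae hint (integrable_finsetSum _ hterm_int) hdist_le
    _ = ∑ j ∈ Finset.range (J + 1), (2 ^ j * a) ^ (-s) * μ.real (B j) := by
        rw [integral_finsetSum _ hterm_int]
        simp only [integral_const_mul, B, integral_indicator_one measurableSet_closedBall]
    _ ≤ ∑ j ∈ Finset.range (J + 1), (2 * K) ^ s := Finset.sum_le_sum fun j _ => hterm j
    _ ≤ (2 * K) ^ s * (1 + Real.logb 2 (b / a)) := by
        rw [Finset.sum_const, Finset.card_range, nsmul_eq_mul, mul_comm]
        exact mul_le_mul_of_nonneg_left (by push_cast; linarith) (by positivity)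

theorem integral_dist_rpow_neg_le_of_isometry_invariant {n : ℕ}
    {μ : Measure (EuclideanSpace ℝ (Fin (n + 1)))} [IsProbabilityMeasure μ]
    (hμ : ∀ Q : EuclideanSpace ℝ (Fin (n + 1)) ≃ₗᵢ[ℝ] EuclideanSpace ℝ (Fin (n + 1)),
      MeasurePreserving Q μ μ)
    {R : ℝ} (hR : 0 ≤ R) (hsupp : ∀ᵐ y ∂μ, ‖y‖ ≤ R) {x : EuclideanSpace ℝ (Fin (n + 1))}
    (hx : R < ‖x‖) :
    ∫ y, dist y x ^ (-(n : ℝ)) ∂μ ≤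
      (6 * (n + 1) / ‖x‖) ^ (n : ℝ) * (1 + Real.logb 2 ((‖x‖ + R) / (‖x‖ - R))) := by
  have hx0 : x ≠ 0 := norm_pos_iff.1 (hR.trans_lt hx)
  rw [show 6 * ((n : ℝ) + 1) / ‖x‖ = 2 * (3 * (n + 1) / ‖x‖) by ring]
  refine integral_dist_rpow_neg_le μ x n.cast_nonneg (sub_pos.2 hx) (by linarith)
    (by positivity) ?_ fun τ hτ => ?_
  · filter_upwards [hsupp] with y hy
    rw [dist_comm, dist_eq_norm]
    exact ⟨by linarith [norm_sub_norm_le x y], by linarith [norm_sub_le x y]⟩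
  · calc μ.real (closedBall x τ) ≤ (3 * (n + 1) * τ / ‖x‖) ^ n * μ.real Set.univ :=
          measureReal_closedBall_le_of_isometry_invariant hμ hx0 hτ
      _ = (3 * (n + 1) / ‖x‖ * τ) ^ (n : ℝ) := by
          rw [probReal_univ, mul_one, Real.rpow_natCast]
          ring

/-- Riesz potential estimate outside the support for radially symmetric compactly
supported probability densities, in the borderline case `k = 1-N`. -/
theorem riesz_potential_estimate_borderline (N : ℕ) (hN : 2 ≤ N) :
    ∃ C₂ : ℝ, 0 < C₂ ∧
      ∀ R : ℝ, 0 < R →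
      ∀ ρ : EuclideanSpace ℝ (Fin N) → ℝ, Measurable ρ →
        (∀ᵐ x ∂volume, 0 ≤ ρ x) → (∫ x, ρ x) = 1 →
        (∃ f : ℝ → ℝ, (∀ r ∈ Set.Ici (0 : ℝ), 0 ≤ f r) ∧ ∀ x, ρ x = f ‖x‖) →
        (∀ᵐ x ∂volume, x ∉ Metric.closedBall (0 : EuclideanSpace ℝ (Fin N)) R → ρ x = 0) →
        ∀ x : EuclideanSpace ℝ (Fin N), R < ‖x‖ →
          (∫ y, ‖x - y‖ ^ (1 - (N : ℝ)) * ρ y) ≤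
            C₂ * (1 + Real.log ((‖x‖ + R) / (‖x‖ - R))) * ‖x‖ ^ (1 - (N : ℝ)) := by
  obtain ⟨n, rfl⟩ : ∃ n, N = n + 1 := ⟨N - 1, by omega⟩
  refine ⟨(6 * (n + 1)) ^ n / Real.log 2, by positivity, ?_⟩
  rintro R hR ρ hρ hρ_nonneg hρ_int ⟨f, -, hρf⟩ hρ_supp x hx
  set μ := volume.withDensity fun y => ENNReal.ofReal (ρ y)
  have := isProbabilityMeasure_withDensity_ofReal hρ_nonneg hρ_int
  have hμ (Q : EuclideanSpace ℝ (Fin (n + 1)) ≃ₗᵢ[ℝ] EuclideanSpace ℝ (Fin (n + 1))) :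
      MeasurePreserving Q μ μ :=
    Q.measurePreserving.withDensity_of_comp_eq hρ.ennreal_ofReal <| funext fun y => by
      simp only [Function.comp_apply, hρf, Q.norm_map]
  have hsupp : ∀ᵐ y ∂μ, ‖y‖ ≤ R := by
    rw [ae_withDensity_iff hρ.ennreal_ofReal]
    filter_upwards [hρ_supp] with y hy hy0
    by_contra h
    exact hy0 (by rw [hy (by simpa using h), ENNReal.ofReal_zero])
  have hr : 0 < ‖x‖ := hR.trans hx
  have hkernel (y : EuclideanSpace ℝ (Fin (n + 1))) :
      ‖x - y‖ ^ (1 - ((n + 1 : ℕ) : ℝ)) = dist y x ^ (-(n : ℝ)) := by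
    rw [dist_comm, dist_eq_norm]; push_cast; ring_nf
  have hconst : (6 * (n + 1) / ‖x‖) ^ (n : ℝ) =
      (6 * (n + 1)) ^ n * ‖x‖ ^ (1 - ((n + 1 : ℕ) : ℝ)) := by
    rw [Real.div_rpow (by positivity) hr.le, Real.rpow_natCast, div_eq_mul_inv,
      ← Real.rpow_neg hr.le]
    push_cast
    ring_nf
  simp_rw [hkernel, ← integral_withDensity_ofReal_eq_integral_mul hρ hρ_nonneg]
  calc _ ≤ (6 * (n + 1) / ‖x‖) ^ (n : ℝ) * (1 + Real.logb 2 ((‖x‖ + R) / (‖x‖ - R))) :=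
        integral_dist_rpow_neg_le_of_isometry_invariant hμ hR.le hsupp hx
    _ ≤ (6 * (n + 1) / ‖x‖) ^ (n : ℝ) *
          ((1 + Real.log ((‖x‖ + R) / (‖x‖ - R))) / Real.log 2) := by
        gcongr
        exact one_add_logb_two_le _
    _ = _ := by rw [hconst]; ring
end

section
/- Let N ≥ 1, k ∈ (−N, 0), and let ρ : ℝ^N → ℝ be measurable with ρ ≥ 0 a.e., ∫_{ℝ^N} ρ = 1, and radially symmetric non-increasing (ρ(x) = f(|x|) for some non-increasing f : [0,∞) → [0,∞)). Then: (a) the Riesz potential (|·|^k ∗ ρ)(x) = ∫_{ℝ^N} |x−y|^k ρ(y) dy tends to 0 as |x| → ∞; and (b) its decay is not faster than |x|^k, namely ∫_{B_1} ρ(y) dy > 0 and (|·|^k ∗ ρ)(x) ≥ (|x|+1)^k ∫_{B_1} ρ(y) dy for all x ∈ ℝ^N, where B_1 is the unit ball centered at the origin. -/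
/-!
Write `ρ x = f ‖x‖` and split the potential at distance `R` from `x`. Near `x`, the kernel
`‖·‖ ^ k` is integrable because `-N < k`, and `ρ ≤ f (‖x‖ - R)` there; far from `x`, the kernel
is at most `R ^ k` and `ρ` has mass `1`. Since `f` is non-increasing and `ρ` is integrable over
the (infinite-measure) space, `f` tends to `0`, so the potential is eventually below `2 R ^ k`,
which is arbitrarily small. For the lower bound, `‖x - y‖ ≤ ‖x‖ + 1` on the unit ball and `k < 0`.
-/

open MeasureTheory Filter Set Metric Topology

noncomputable section

namespace RieszPotential

variable {E : Type*} [NormedAddCommGroup E] {k R : ℝ}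

lemma norm_rpow_mul_le_indicator_add (hk : k ≤ 0) (hR : 0 < R) (z : E) {b M : ℝ}
    (hb : 0 ≤ b) (hM : ‖z‖ < R → b ≤ M) :
    ‖z‖ ^ k * b ≤ M * (ball (0 : E) R).indicator (fun z => ‖z‖ ^ k) z + R ^ k * b := by
  by_cases hz : ‖z‖ < R
  · rw [indicator_of_mem (mem_ball_zero_iff.2 hz), mul_comm M]
    have := mul_le_mul_of_nonneg_left (hM hz) (Real.rpow_nonneg (norm_nonneg z) k)
    nlinarith [Real.rpow_nonneg hR.le k]
  · rw [indicator_of_notMem (by simpa using hz), mul_zero, zero_add]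
    exact mul_le_mul_of_nonneg_right (Real.rpow_le_rpow_of_nonpos hR (not_lt.1 hz) hk) hb

variable [NormedSpace ℝ E] [FiniteDimensional ℝ E] [MeasurableSpace E] [BorelSpace E]
  {μ : Measure E} [μ.IsAddHaarMeasure]

lemma integrable_indicator_ball_norm_rpow [Nontrivial E]
    (hk : -(Module.finrank ℝ E : ℝ) < k) (R : ℝ) :
    Integrable ((ball (0 : E) R).indicator fun z => ‖z‖ ^ k) μ := by
  refine IntegrableOn.integrable_indicator ?_ measurableSet_ball
  refine integrableOn_ball_of_norm_le_rpow Module.finrank_pos (C := 1) (α := -k) (by linarith)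
    (ae_of_all _ fun z => ?_)
    (measurable_norm.pow_const k).aestronglyMeasurable
  rw [Real.norm_of_nonneg (by positivity), neg_neg, one_mul]

variable {ρ : E → ℝ}

lemma integrable_norm_sub_rpow_mul [Nontrivial E] (hk₁ : -(Module.finrank ℝ E : ℝ) < k)
    (hk₂ : k ≤ 0) {M : ℝ} (hρ0 : ∀ y, 0 ≤ ρ y) (hρM : ∀ y, ρ y ≤ M) (hρ : Integrable ρ μ)
    (x : E) : Integrable (fun y => ‖x - y‖ ^ k * ρ y) μ := by
  refine Integrable.mono' ((((integrable_indicator_ball_norm_rpow hk₁ 1).comp_sub_left x).const_mul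
    M).add (hρ.const_mul (1 ^ k))) ((by fun_prop : Measurable fun y : E => ‖x - y‖ ^ k)
      |>.aestronglyMeasurable.mul hρ.1) (ae_of_all _ fun y => ?_)
  rw [Real.norm_of_nonneg (mul_nonneg (by positivity) (hρ0 y))]
  exact norm_rpow_mul_le_indicator_add hk₂ one_pos _ (hρ0 y) fun _ => hρM y

lemma integral_norm_sub_rpow_mul_le [Nontrivial E] (hk₁ : -(Module.finrank ℝ E : ℝ) < k)
    (hk₂ : k ≤ 0) (hR : 0 < R) (hρ0 : ∀ y, 0 ≤ ρ y) (hρ : Integrable ρ μ) {x : E}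
    (hint : Integrable (fun y => ‖x - y‖ ^ k * ρ y) μ) {M : ℝ} (hM : ∀ y ∈ ball x R, ρ y ≤ M) :
    ∫ y, ‖x - y‖ ^ k * ρ y ∂μ ≤ M * (∫ z in ball 0 R, ‖z‖ ^ k ∂μ) + R ^ k * ∫ y, ρ y ∂μ := by
  have hK := integrable_indicator_ball_norm_rpow (μ := μ) hk₁ R
  calc ∫ y, ‖x - y‖ ^ k * ρ y ∂μ
      ≤ ∫ y, (M * (ball (0 : E) R).indicator (fun z => ‖z‖ ^ k) (x - y) + R ^ k * ρ y) ∂μ :=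
        integral_mono hint ((hK.comp_sub_left x).const_mul M |>.add (hρ.const_mul _)) fun y =>
          norm_rpow_mul_le_indicator_add hk₂ hR _ (hρ0 y) fun hy =>
            hM y (by rwa [mem_ball, dist_eq_norm, norm_sub_rev])
    _ = M * (∫ z in ball 0 R, ‖z‖ ^ k ∂μ) + R ^ k * ∫ y, ρ y ∂μ := by
        rw [integral_add ((hK.comp_sub_left x).const_mul M) (hρ.const_mul _),
          integral_const_mul, integral_const_mul, integral_sub_left_eq_self _ μ x,
          integral_indicator measurableSet_ball]

lemma mul_setIntegral_ball_le_integral_norm_sub_rpow [Nontrivial E] (hk : k ≤ 0) {r : ℝ}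
    (hρ0 : ∀ y, 0 ≤ ρ y) (hρ : Integrable ρ μ) {x : E}
    (hint : Integrable (fun y => ‖x - y‖ ^ k * ρ y) μ) :
    (‖x‖ + r) ^ k * ∫ y in ball 0 r, ρ y ∂μ ≤ ∫ y, ‖x - y‖ ^ k * ρ y ∂μ := by
  calc (‖x‖ + r) ^ k * ∫ y in ball 0 r, ρ y ∂μ
      = ∫ y in ball 0 r, (‖x‖ + r) ^ k * ρ y ∂μ := (integral_const_mul _ _).symm
    _ ≤ ∫ y in ball 0 r, ‖x - y‖ ^ k * ρ y ∂μ := by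
        refine setIntegral_mono_ae_restrict (hρ.integrableOn.const_mul _) hint.integrableOn ?_
        -- at `y = x` the kernel takes the junk value `0 ^ k = 0`, so this only holds a.e.
        filter_upwards [ae_restrict_mem measurableSet_ball, ae_restrict_of_ae (μ.ae_ne x)]
          with y hy hyx
        have hxy : ‖x - y‖ ≤ ‖x‖ + r := by
          linarith [norm_sub_le x y, mem_ball_zero_iff.1 hy]
        exact mul_le_mul_of_nonneg_right (Real.rpow_le_rpow_of_nonpos
          (norm_pos_iff.2 (sub_ne_zero.2 (Ne.symm hyx))) hxy hk) (hρ0 y)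
    _ ≤ ∫ y, ‖x - y‖ ^ k * ρ y ∂μ :=
        setIntegral_le_integral hint (ae_of_all _ fun y => mul_nonneg (by positivity) (hρ0 y))

variable {f : ℝ → ℝ}

lemma integrable_norm_sub_rpow_mul_comp_norm [Nontrivial E]
    (hk₁ : -(Module.finrank ℝ E : ℝ) < k) (hk₂ : k ≤ 0) (hf0 : ∀ r ∈ Ici (0 : ℝ), 0 ≤ f r)
    (hf : AntitoneOn f (Ici 0)) (hint : Integrable (fun x : E => f ‖x‖) μ) (x : E) :
    Integrable (fun y => ‖x - y‖ ^ k * f ‖y‖) μ :=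
  integrable_norm_sub_rpow_mul hk₁ hk₂ (fun y => hf0 _ (norm_nonneg y))
    (fun y => hf self_mem_Ici (norm_nonneg y) (norm_nonneg y)) hint x

lemma tendsto_atTop_zero_of_integrable_comp_norm [Nontrivial E] (hf0 : ∀ r ∈ Ici (0 : ℝ), 0 ≤ f r)
    (hf : AntitoneOn f (Ici 0)) (hint : Integrable (fun x : E => f ‖x‖) μ) :
    Tendsto f atTop (𝓝 0) := by
  refine tendsto_order.2 ⟨fun a ha => ?_, fun ε hε => ?_⟩
  · filter_upwards [eventually_ge_atTop 0] with t ht using ha.trans_le (hf0 t ht)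
  obtain ⟨s, hs, hsε⟩ : ∃ s ∈ Ici (0 : ℝ), f s < ε := by
    by_contra! hbig
    have hconst : Integrable (fun _ : E => ε) μ := hint.mono' aestronglyMeasurable_const
      (ae_of_all _ fun x => (Real.norm_of_nonneg hε.le).trans_le (hbig _ (norm_nonneg x)))
    rcases integrable_const_iff.1 hconst with h | h
    · exact hε.ne' h
    · exact measure_ne_top μ univ (measure_univ_of_isAddLeftInvariant μ)
  filter_upwards [eventually_ge_atTop s] with t ht
  exact (hf hs (mem_Ici.2 (le_trans hs ht)) ht).trans_lt hsε

theorem tendsto_integral_norm_sub_rpow_mul_cobounded [Nontrivial E]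
    (hk₁ : -(Module.finrank ℝ E : ℝ) < k) (hk₂ : k < 0) (hf0 : ∀ r ∈ Ici (0 : ℝ), 0 ≤ f r)
    (hf : AntitoneOn f (Ici 0)) (hint : Integrable (fun x : E => f ‖x‖) μ) :
    Tendsto (fun x => ∫ y, ‖x - y‖ ^ k * f ‖y‖ ∂μ) (Bornology.cobounded E) (𝓝 0) := by
  have hρ0 : ∀ y : E, 0 ≤ f ‖y‖ := fun y => hf0 _ (norm_nonneg y)
  refine tendsto_order.2 ⟨fun a ha => .of_forall fun x => ha.trans_le
    (integral_nonneg fun y => mul_nonneg (by positivity) (hρ0 y)), fun ε hε => ?_⟩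
  have hfar : Tendsto (fun R : ℝ => R ^ k * ∫ y, f ‖y‖ ∂μ) atTop (𝓝 0) := by
    simpa using (tendsto_rpow_neg_atTop (neg_pos.2 hk₂)).mul_const (∫ y, f ‖y‖ ∂μ)
  obtain ⟨R, hRε, hR⟩ :=
    ((hfar.eventually (gt_mem_nhds (half_pos hε))).and (eventually_gt_atTop 0)).exists
  have hnear : Tendsto (fun x : E => f (‖x‖ - R) * ∫ z in ball 0 R, ‖z‖ ^ k ∂μ)
      (Bornology.cobounded E) (𝓝 0) := by
    simpa [sub_eq_add_neg] using ((tendsto_atTop_zero_of_integrable_comp_norm hf0 hf hint).comp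
      (tendsto_atTop_add_const_right _ (-R) tendsto_norm_cobounded_atTop)).mul_const
        (∫ z in ball 0 R, ‖z‖ ^ k ∂μ)
  filter_upwards [hnear.eventually (gt_mem_nhds (half_pos hε)),
    tendsto_norm_cobounded_atTop.eventually (eventually_ge_atTop R)] with x hxε hxR
  have hM : ∀ y ∈ ball x R, f ‖y‖ ≤ f (‖x‖ - R) := fun y hy =>
    hf (mem_Ici.2 (sub_nonneg.2 hxR)) (mem_Ici.2 (norm_nonneg y)) (by
      linarith [norm_sub_norm_le x y, norm_sub_rev x y, mem_ball_iff_norm.1 hy])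
  calc ∫ y, ‖x - y‖ ^ k * f ‖y‖ ∂μ
      ≤ f (‖x‖ - R) * (∫ z in ball 0 R, ‖z‖ ^ k ∂μ) + R ^ k * ∫ y, f ‖y‖ ∂μ :=
        integral_norm_sub_rpow_mul_le hk₁ hk₂.le hR hρ0 hint
          (integrable_norm_sub_rpow_mul_comp_norm hk₁ hk₂.le hf0 hf hint x) hM
    _ < ε := by linarith

lemma setIntegral_ball_comp_norm_pos (hf0 : ∀ r ∈ Ici (0 : ℝ), 0 ≤ f r)
    (hf : AntitoneOn f (Ici 0)) (hint : Integrable (fun x : E => f ‖x‖) μ)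
    (hpos : 0 < ∫ x, f ‖x‖ ∂μ) {r : ℝ} (hr : 0 < r) :
    0 < ∫ x in ball (0 : E) r, f ‖x‖ ∂μ := by
  rcases (hf0 r hr.le).eq_or_lt with hfr | hfr
  · -- `f` vanishes from `r` on, so all the mass lies in the ball
    have hout : ∫ x in (ball (0 : E) r)ᶜ, f ‖x‖ ∂μ = 0 := by
      refine setIntegral_eq_zero_of_forall_eq_zero fun x hx =>
        le_antisymm ?_ (hf0 _ (norm_nonneg x))
      have hrx : r ≤ ‖x‖ := by simpa using hx
      exact hfr ▸ hf (mem_Ici.2 hr.le) (mem_Ici.2 (norm_nonneg x)) hrx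
    rwa [← integral_add_compl measurableSet_ball hint, hout, add_zero] at hpos
  · calc 0 < μ.real (ball 0 r) * f r :=
          mul_pos (ENNReal.toReal_pos (measure_ball_pos μ 0 hr).ne' measure_ball_lt_top.ne) hfr
        _ = ∫ _ in ball (0 : E) r, f r ∂μ := by rw [setIntegral_const, smul_eq_mul]
        _ ≤ ∫ x in ball (0 : E) r, f ‖x‖ ∂μ :=
          setIntegral_mono_on (integrableOn_const measure_ball_lt_top.ne) hint.integrableOn
            measurableSet_ball fun x hx => hf (mem_Ici.2 (norm_nonneg x)) (mem_Ici.2 hr.le)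
              (mem_ball_zero_iff.1 hx).le

end RieszPotential

open RieszPotential

theorem riesz_potential_decay_general (N : ℕ) (k : ℝ)
    (hk₁ : -(N : ℝ) < k) (hk₂ : k < 0)
    (ρ : EuclideanSpace ℝ (Fin N) → ℝ) (hmass : (∫ x, ρ x) = 1)
    (hrad : ∃ f : ℝ → ℝ, (∀ r ∈ Set.Ici (0 : ℝ), 0 ≤ f r) ∧ AntitoneOn f (Set.Ici 0) ∧
      ∀ x, ρ x = f ‖x‖) :
    Tendsto (fun x : EuclideanSpace ℝ (Fin N) => ∫ y, ‖x - y‖ ^ k * ρ y)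
        (Bornology.cobounded _) (nhds 0) ∧
      0 < (∫ y in Metric.ball (0 : EuclideanSpace ℝ (Fin N)) 1, ρ y) ∧
      ∀ x : EuclideanSpace ℝ (Fin N),
        (‖x‖ + 1) ^ k * (∫ y in Metric.ball (0 : EuclideanSpace ℝ (Fin N)) 1, ρ y) ≤
          ∫ y, ‖x - y‖ ^ k * ρ y := by
  obtain ⟨f, hf0, hf, hρ⟩ := hrad
  obtain rfl : ρ = fun x => f ‖x‖ := funext hρ
  have : Nonempty (Fin N) := ⟨⟨0, by exact_mod_cast (by linarith : (0 : ℝ) < N)⟩⟩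
  have hdim : -(Module.finrank ℝ (EuclideanSpace ℝ (Fin N)) : ℝ) < k := by
    rwa [finrank_euclideanSpace_fin]
  have hint : Integrable fun x : EuclideanSpace ℝ (Fin N) => f ‖x‖ :=
    .of_integral_ne_zero (hmass ▸ one_ne_zero)
  exact ⟨tendsto_integral_norm_sub_rpow_mul_cobounded hdim hk₂ hf0 hf hint,
    setIntegral_ball_comp_norm_pos hf0 hf hint (hmass ▸ one_pos) one_pos, fun x =>
      mul_setIntegral_ball_le_integral_norm_sub_rpow hk₂.le (fun y => hf0 _ (norm_nonneg y)) hint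
        (integrable_norm_sub_rpow_mul_comp_norm hdim hk₂.le hf0 hf hint x)⟩

/-- The Riesz potential of a radially symmetric non-increasing probability density
vanishes at infinity, and its decay is not faster than `|x|^k`. -/
theorem riesz_potential_decay (N : ℕ) (hN : 1 ≤ N) (k : ℝ)
    (hk₁ : -(N : ℝ) < k) (hk₂ : k < 0)
    (ρ : EuclideanSpace ℝ (Fin N) → ℝ) (hmeas : Measurable ρ)
    (hnn : ∀ᵐ x ∂volume, 0 ≤ ρ x) (hmass : (∫ x, ρ x) = 1)
    (hrad : ∃ f : ℝ → ℝ, (∀ r ∈ Set.Ici (0 : ℝ), 0 ≤ f r) ∧ AntitoneOn f (Set.Ici 0) ∧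
      ∀ x, ρ x = f ‖x‖) :
    Tendsto (fun x : EuclideanSpace ℝ (Fin N) => ∫ y, ‖x - y‖ ^ k * ρ y)
        (Bornology.cobounded _) (nhds 0) ∧
      0 < (∫ y in Metric.ball (0 : EuclideanSpace ℝ (Fin N)) 1, ρ y) ∧
      ∀ x : EuclideanSpace ℝ (Fin N),
        (‖x‖ + 1) ^ k * (∫ y in Metric.ball (0 : EuclideanSpace ℝ (Fin N)) 1, ρ y) ≤
          ∫ y, ‖x - y‖ ^ k * ρ y :=
  riesz_potential_decay_general N k hk₁ hk₂ ρ hmass hrad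
end
end

section
/- Let N ≥ 2, k ∈ (1−N, 0), and let ρ : ℝ^N → ℝ be measurable with ρ ≥ 0 a.e., ρ ∈ L¹(ℝ^N) ∩ L^∞(ℝ^N) and ∫_{ℝ^N} ρ = 1. Then the mean-field potential S_k(x) := ∫_{ℝ^N} (|x−y|^k / k) ρ(y) dy is a Lipschitz function on ℝ^N; i.e. there exists L < ∞ such that |S_k(x) − S_k(x')| ≤ L |x − x'| for all x, x' ∈ ℝ^N (equivalently, ∇S_k ∈ L^∞(ℝ^N)). -/
/-!
By the mean value theorem,
`|‖x - y‖ ^ k - ‖x' - y‖ ^ k| ≤ |k| (‖x - y‖ ^ (k - 1) + ‖x' - y‖ ^ (k - 1)) ‖x - x'‖`,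
so it suffices to bound `∫ ‖x - y‖ ^ (k - 1) |ρ y| dy` uniformly in `x`. Since `k - 1 > -N`, the
kernel `‖z‖ ^ (k - 1)` is integrable on the unit ball and at most `1` outside it, so that integral
is at most `‖ρ‖_∞ ∫_{‖z‖ < 1} ‖z‖ ^ (k - 1) dz + ‖ρ‖₁`.
-/

open MeasureTheory Metric Module

lemma Real.abs_rpow_sub_rpow_le {a b : ℝ} (ha : 0 < a) (hb : 0 < b) (k : ℝ) :
    |a ^ k - b ^ k| ≤ |k| * (a ^ (k - 1) + b ^ (k - 1)) * |a - b| := by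
  wlog hab : a ≤ b generalizing a b
  · rw [abs_sub_comm, abs_sub_comm a, add_comm]
    exact this hb ha (le_of_not_ge hab)
  have hderiv : ∀ t ∈ Set.Icc a b,
      HasDerivWithinAt (fun u : ℝ => u ^ k) (k * t ^ (k - 1)) (Set.Icc a b) t := fun t ht =>
    (Real.hasDerivAt_rpow_const (Or.inl (ha.trans_le ht.1).ne')).hasDerivWithinAt
  have hbound : ∀ t ∈ Set.Icc a b, ‖k * t ^ (k - 1)‖ ≤ |k| * (a ^ (k - 1) + b ^ (k - 1)) := by
    intro t ht
    have ht₀ : 0 < t := ha.trans_le ht.1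
    rw [norm_mul, Real.norm_eq_abs, Real.norm_of_nonneg (by positivity)]
    gcongr
    rcases le_total (k - 1) 0 with hk | hk
    · exact (Real.rpow_le_rpow_of_nonpos ha ht.1 hk).trans (le_add_of_nonneg_right (by positivity))
    · exact (Real.rpow_le_rpow ht₀.le ht.2 hk).trans (le_add_of_nonneg_left (by positivity))
  have := (convex_Icc a b).norm_image_sub_le_of_norm_hasDerivWithin_le hderiv hbound
    (Set.left_mem_Icc.2 hab) (Set.right_mem_Icc.2 hab)
  rw [abs_sub_comm (a ^ k)]
  simpa only [Real.norm_eq_abs, abs_sub_comm b] using this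

lemma abs_rpow_norm_sub_div_mul_sub_le {E : Type*} [NormedAddCommGroup E] {x x' y : E}
    (hx : y ≠ x) (hx' : y ≠ x') {k : ℝ} (hk : k ≠ 0) (r : ℝ) :
    |‖x - y‖ ^ k / k * r - ‖x' - y‖ ^ k / k * r| ≤
      ‖x - x'‖ * (‖‖x - y‖ ^ (k - 1) * r‖ + ‖‖x' - y‖ ^ (k - 1) * r‖) := by
  have ha : 0 < ‖x - y‖ := norm_pos_iff.2 (sub_ne_zero.2 hx.symm)
  have hb : 0 < ‖x' - y‖ := norm_pos_iff.2 (sub_ne_zero.2 hx'.symm)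
  have hab : |‖x - y‖ - ‖x' - y‖| ≤ ‖x - x'‖ := by
    simpa using abs_norm_sub_norm_le (x - y) (x' - y)
  have hmvt : |‖x - y‖ ^ k - ‖x' - y‖ ^ k| / |k| ≤
      (‖x - y‖ ^ (k - 1) + ‖x' - y‖ ^ (k - 1)) * ‖x - x'‖ := by
    rw [div_le_iff₀ (abs_pos.2 hk)]
    calc |‖x - y‖ ^ k - ‖x' - y‖ ^ k|
        ≤ |k| * (‖x - y‖ ^ (k - 1) + ‖x' - y‖ ^ (k - 1)) * |‖x - y‖ - ‖x' - y‖| :=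
          Real.abs_rpow_sub_rpow_le ha hb k
      _ ≤ |k| * (‖x - y‖ ^ (k - 1) + ‖x' - y‖ ^ (k - 1)) * ‖x - x'‖ := by gcongr
      _ = (‖x - y‖ ^ (k - 1) + ‖x' - y‖ ^ (k - 1)) * ‖x - x'‖ * |k| := by ring
  calc |‖x - y‖ ^ k / k * r - ‖x' - y‖ ^ k / k * r|
      = |‖x - y‖ ^ k - ‖x' - y‖ ^ k| / |k| * |r| := by
        rw [← sub_mul, ← sub_div, abs_mul, abs_div]
    _ ≤ (‖x - y‖ ^ (k - 1) + ‖x' - y‖ ^ (k - 1)) * ‖x - x'‖ * |r| := by gcongr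
    _ = ‖x - x'‖ * (‖‖x - y‖ ^ (k - 1) * r‖ + ‖‖x' - y‖ ^ (k - 1) * r‖) := by
        simp only [norm_mul, Real.norm_eq_abs, abs_of_pos (Real.rpow_pos_of_pos ha _),
          abs_of_pos (Real.rpow_pos_of_pos hb _)]
        ring

lemma MeasureTheory.MemLp.exists_ae_norm_le {α E : Type*} [MeasurableSpace α] {μ : Measure α}
    [NormedAddCommGroup E] {f : α → E} (hf : MemLp f ⊤ μ) : ∃ M, ∀ᵐ x ∂μ, ‖f x‖ ≤ M := by
  refine ⟨(eLpNorm f ⊤ μ).toReal, ?_⟩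
  filter_upwards [ae_le_eLpNormEssSup (f := f) (μ := μ)] with x hx
  have hfin := hf.2
  rw [eLpNorm_exponent_top] at hfin ⊢
  simpa using ENNReal.toReal_mono hfin.ne hx

lemma rpow_norm_le_indicator_ball_add_one {E : Type*} [SeminormedAddCommGroup E] {l : ℝ}
    (hl : l ≤ 0) (z : E) : ‖z‖ ^ l ≤ (ball 0 1).indicator (fun z => ‖z‖ ^ l) z + 1 := by
  by_cases hz : z ∈ ball (0 : E) 1
  · simp [Set.indicator_of_mem hz]
  · rw [Set.indicator_of_notMem hz, zero_add]
    exact Real.rpow_le_one_of_one_le_of_nonpos (by simpa using hz) hl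

lemma ae_norm_rpow_norm_sub_mul_le {E : Type*} [SeminormedAddCommGroup E] [MeasurableSpace E]
    {μ : Measure E} {ρ : E → ℝ} {l M : ℝ} (hl : l ≤ 0) (hM : ∀ᵐ y ∂μ, ‖ρ y‖ ≤ M) (x : E) :
    ∀ᵐ y ∂μ, ‖‖x - y‖ ^ l * ρ y‖ ≤
      M * (ball 0 1).indicator (fun z => ‖z‖ ^ l) (x - y) + ‖ρ y‖ := by
  filter_upwards [hM] with y hy
  have hg : 0 ≤ (ball 0 1).indicator (fun z : E => ‖z‖ ^ l) (x - y) :=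
    Set.indicator_nonneg (fun _ _ => by positivity) _
  calc ‖‖x - y‖ ^ l * ρ y‖ = ‖x - y‖ ^ l * ‖ρ y‖ := by
        rw [norm_mul, Real.norm_of_nonneg (by positivity)]
    _ ≤ ((ball 0 1).indicator (fun z => ‖z‖ ^ l) (x - y) + 1) * ‖ρ y‖ := by
        gcongr
        exact rpow_norm_le_indicator_ball_add_one hl _
    _ ≤ M * (ball 0 1).indicator (fun z => ‖z‖ ^ l) (x - y) + ‖ρ y‖ := by
        rw [add_mul, one_mul, mul_comm M]
        gcongr

section AddHaar

variable {E : Type*} [NormedAddCommGroup E] [NormedSpace ℝ E] [FiniteDimensional ℝ E]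
  [MeasurableSpace E] [BorelSpace E] {μ : Measure E} [μ.IsAddHaarMeasure] {l : ℝ}

lemma integrable_indicator_ball_rpow_norm (hd : 1 ≤ finrank ℝ E)
    (hl : -(finrank ℝ E : ℝ) < l) :
    Integrable ((ball (0 : E) 1).indicator fun z => ‖z‖ ^ l) μ := by
  refine (integrableOn_ball_of_norm_le_rpow hd (C := 1) (α := -l) (by linarith) ?_ ?_)
    |>.integrable_indicator measurableSet_ball
  · refine Filter.Eventually.of_forall fun z => ?_
    rw [neg_neg, one_mul, Real.norm_of_nonneg (by positivity)]
  · exact (continuous_norm.measurable.pow_const l).aestronglyMeasurable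

variable {ρ : E → ℝ} (hd : 1 ≤ finrank ℝ E) (hl₁ : -(finrank ℝ E : ℝ) < l) (hl₂ : l ≤ 0)
  (hρ : Integrable ρ μ) (hρ' : MemLp ρ ⊤ μ)
include hd hl₁ hl₂ hρ hρ'

lemma integrable_rpow_norm_sub_mul (x : E) : Integrable (fun y => ‖x - y‖ ^ l * ρ y) μ := by
  obtain ⟨M, hM⟩ := hρ'.exists_ae_norm_le
  refine Integrable.mono' ?_ ?_ (ae_norm_rpow_norm_sub_mul_le hl₂ hM x)
  · exact (((integrable_indicator_ball_rpow_norm hd hl₁).comp_sub_left x).const_mul M).add hρ.norm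
  · exact ((continuous_const.sub continuous_id).norm.measurable.pow_const l)
      |>.aestronglyMeasurable.mul hρ.1

lemma exists_integral_norm_rpow_norm_sub_mul_le :
    ∃ C, ∀ x : E, ∫ y, ‖‖x - y‖ ^ l * ρ y‖ ∂μ ≤ C := by
  obtain ⟨M, hM⟩ := hρ'.exists_ae_norm_le
  set g : E → ℝ := (ball 0 1).indicator fun z => ‖z‖ ^ l
  have hg (x : E) : Integrable (fun y => M * g (x - y)) μ :=
    ((integrable_indicator_ball_rpow_norm hd hl₁).comp_sub_left x).const_mul M
  refine ⟨M * ∫ z, g z ∂μ + ∫ y, ‖ρ y‖ ∂μ, fun x => ?_⟩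
  calc ∫ y, ‖‖x - y‖ ^ l * ρ y‖ ∂μ ≤ ∫ y, M * g (x - y) + ‖ρ y‖ ∂μ :=
        integral_mono_ae (integrable_rpow_norm_sub_mul hd hl₁ hl₂ hρ hρ' x).norm
          ((hg x).add hρ.norm) (ae_norm_rpow_norm_sub_mul_le hl₂ hM x)
    _ = M * ∫ z, g z ∂μ + ∫ y, ‖ρ y‖ ∂μ := by
        rw [integral_add (hg x) hρ.norm, integral_const_mul, integral_sub_left_eq_self _ μ x]

end AddHaar

theorem potential_lipschitz_general (N : ℕ) (hN : 2 ≤ N) (k : ℝ)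
    (hk₁ : 1 - (N : ℝ) < k) (hk₂ : k < 0)
    (ρ : EuclideanSpace ℝ (Fin N) → ℝ)
    (hint : Integrable ρ)
    (hbdd : MemLp ρ ⊤) :
    ∃ L : ℝ, ∀ x x' : EuclideanSpace ℝ (Fin N),
      |(∫ y, ‖x - y‖ ^ k / k * ρ y) - ∫ y, ‖x' - y‖ ^ k / k * ρ y| ≤ L * ‖x - x'‖ := by
  have hd : 1 ≤ finrank ℝ (EuclideanSpace ℝ (Fin N)) := by
    rw [finrank_euclideanSpace_fin]; omega
  have : Nontrivial (EuclideanSpace ℝ (Fin N)) := Module.nontrivial_of_finrank_pos hd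
  have hk : -(finrank ℝ (EuclideanSpace ℝ (Fin N)) : ℝ) < k - 1 := by
    rw [finrank_euclideanSpace_fin]; linarith
  have hS (x : EuclideanSpace ℝ (Fin N)) : Integrable fun y => ‖x - y‖ ^ k / k * ρ y := by
    simp_rw [div_mul_eq_mul_div]
    exact (integrable_rpow_norm_sub_mul hd (by linarith) hk₂.le hint hbdd x).div_const k
  have hK (x : EuclideanSpace ℝ (Fin N)) : Integrable fun y => ‖‖x - y‖ ^ (k - 1) * ρ y‖ :=
    (integrable_rpow_norm_sub_mul hd hk (by linarith) hint hbdd x).norm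
  obtain ⟨C, hC⟩ := exists_integral_norm_rpow_norm_sub_mul_le hd hk (by linarith) hint hbdd
  refine ⟨2 * C, fun x x' => ?_⟩
  calc |(∫ y, ‖x - y‖ ^ k / k * ρ y) - ∫ y, ‖x' - y‖ ^ k / k * ρ y|
      = |∫ y, (‖x - y‖ ^ k / k * ρ y - ‖x' - y‖ ^ k / k * ρ y)| := by
        rw [integral_sub (hS x) (hS x')]
    _ ≤ ∫ y, |‖x - y‖ ^ k / k * ρ y - ‖x' - y‖ ^ k / k * ρ y| := abs_integral_le_integral_abs
    _ ≤ ∫ y, ‖x - x'‖ * (‖‖x - y‖ ^ (k - 1) * ρ y‖ + ‖‖x' - y‖ ^ (k - 1) * ρ y‖) := by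
        refine integral_mono_ae ((hS x).sub (hS x')).abs (((hK x).add (hK x')).const_mul _) ?_
        filter_upwards [volume.ae_ne x, volume.ae_ne x'] with y hy hy'
        exact abs_rpow_norm_sub_div_mul_sub_le hy hy' hk₂.ne (ρ y)
    _ = ‖x - x'‖ * ((∫ y, ‖‖x - y‖ ^ (k - 1) * ρ y‖) + ∫ y, ‖‖x' - y‖ ^ (k - 1) * ρ y‖) := by
        rw [integral_const_mul, integral_add (hK x) (hK x')]
    _ ≤ ‖x - x'‖ * (C + C) := by gcongr <;> apply hC
    _ = 2 * C * ‖x - x'‖ := by ring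

/-- For `k ∈ (1-N, 0)`, the mean-field potential `S_k = W_k ∗ ρ` of a bounded
probability density is Lipschitz on `ℝ^N`. -/
theorem potential_lipschitz (N : ℕ) (hN : 2 ≤ N) (k : ℝ)
    (hk₁ : 1 - (N : ℝ) < k) (hk₂ : k < 0)
    (ρ : EuclideanSpace ℝ (Fin N) → ℝ) (hmeas : Measurable ρ)
    (hnn : ∀ᵐ x ∂volume, 0 ≤ ρ x) (hint : Integrable ρ)
    (hbdd : MemLp ρ ⊤) (hmass : (∫ x, ρ x) = 1) :
    ∃ L : ℝ, ∀ x x' : EuclideanSpace ℝ (Fin N),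
      |(∫ y, ‖x - y‖ ^ k / k * ρ y) - ∫ y, ‖x' - y‖ ^ k / k * ρ y| ≤ L * ‖x - x'‖ :=
  potential_lipschitz_general N hN k hk₁ hk₂ ρ hint hbdd
end

section
/- Let T : ℝ → ℝ be non-decreasing and let g : ℝ → [0, ∞) be a measurable function such that T is differentiable at almost every x ∈ ℝ with derivative T'(x) = g(x). Let 𝒦 : [0, ∞) → ℝ be continuous, non-decreasing and concave on [0, ∞). Then for all real a < b, 𝒦( (T(b) − T(a)) / (b − a) ) ≥ ∫_0^1 𝒦( g((1−s)a + s b) ) ds. -/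
/-!
Substituting `x = (1 - s) a + s b` turns the left-hand side into the average of `𝒦 ∘ g` over
`[a, b]`, which Jensen's inequality bounds by `𝒦` of the average of `g`. As `g` is a.e. the
derivative of the monotone `T`, `∫_a^b g ≤ T b - T a` (the singular part of `dT` is nonnegative),
and `𝒦` is monotone. Integrability of `𝒦 ∘ g` comes from the affine bounds
`𝒦 0 ≤ 𝒦 t ≤ 𝒦 1 + (𝒦 1 - 𝒦 0) t` on `[0, ∞)`.
-/

open MeasureTheory Set intervalIntegral

open scoped Interval

theorem Monotone.ae_nonneg_of_ae_hasDerivAt {T g : ℝ → ℝ} (hT : Monotone T)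
    (hderiv : ∀ᵐ x, HasDerivAt T (g x) x) : ∀ᵐ x, 0 ≤ g x :=
  hderiv.mono fun _ hx => hx.deriv ▸ hT.deriv_nonneg

theorem MonotoneOn.intervalIntegrable_of_ae_hasDerivAt {T g : ℝ → ℝ} {a b : ℝ}
    (hT : MonotoneOn T (uIcc a b)) (hderiv : ∀ᵐ x, HasDerivAt T (g x) x) :
    IntervalIntegrable g volume a b :=
  hT.intervalIntegrable_deriv.congr_ae <| ae_restrict_of_ae <| hderiv.mono fun _ hx => hx.deriv

theorem MonotoneOn.intervalIntegral_le_of_ae_hasDerivAt {T g : ℝ → ℝ} {a b : ℝ}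
    (hT : MonotoneOn T (uIcc a b)) (hderiv : ∀ᵐ x, HasDerivAt T (g x) x) (hab : a ≤ b) :
    ∫ x in a..b, g x ≤ T b - T a := by
  have hmem := hT.intervalIntegral_deriv_mem_uIcc
  rw [integral_congr_ae (hderiv.mono fun _ hx _ => hx.deriv),
    uIcc_of_le (sub_nonneg.2 (hT (by simp) (by simp) hab))] at hmem
  exact hmem.2

theorem MonotoneOn.interval_average_le_slope_of_ae_hasDerivAt {T g : ℝ → ℝ} {a b : ℝ}
    (hT : MonotoneOn T (uIcc a b)) (hderiv : ∀ᵐ x, HasDerivAt T (g x) x) (hab : a < b) :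
    ⨍ x in a..b, g x ≤ (T b - T a) / (b - a) := by
  rw [interval_average_eq_div]
  exact div_le_div_of_nonneg_right (hT.intervalIntegral_le_of_ae_hasDerivAt hderiv hab.le)
    (sub_pos.2 hab).le

theorem ConcaveOn.le_add_mul_of_monotoneOn {f : ℝ → ℝ} (hf : ConcaveOn ℝ (Ici 0) f)
    (hm : MonotoneOn f (Ici 0)) {t : ℝ} (ht : 0 ≤ t) : f t ≤ f 1 + (f 1 - f 0) * t := by
  have h01 : f 0 ≤ f 1 := hm self_mem_Ici (mem_Ici.2 zero_le_one) zero_le_one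
  rcases le_or_gt t 1 with ht1 | ht1
  · nlinarith [hm ht (mem_Ici.2 zero_le_one) ht1]
  · have hslope := hf.slope_anti_adjacent self_mem_Ici (mem_Ici.2 ht) zero_lt_one ht1
    rw [div_le_iff₀ (sub_pos.2 ht1), sub_zero, div_one] at hslope
    nlinarith

theorem ConcaveOn.integrable_comp_of_monotoneOn {α : Type*} [MeasurableSpace α] {μ : Measure α}
    [IsFiniteMeasure μ] {f : ℝ → ℝ} {g : α → ℝ} (hf : ConcaveOn ℝ (Ici 0) f)
    (hfc : ContinuousOn f (Ici 0)) (hm : MonotoneOn f (Ici 0)) (hg : Integrable g μ)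
    (hg0 : ∀ᵐ x ∂μ, 0 ≤ g x) : Integrable (fun x => f (g x)) μ := by
  have hfg : (fun x => f (max (g x) 0)) =ᵐ[μ] fun x => f (g x) :=
    hg0.mono fun x hx => congrArg f (max_eq_left hx)
  have hmeas : AEStronglyMeasurable (fun x => f (g x)) μ :=
    ((hfc.comp_continuous (continuous_id.max continuous_const)
      fun _ => mem_Ici.2 (le_max_right _ _)).comp_aestronglyMeasurable
        hg.aestronglyMeasurable).congr hfg
  refine integrable_of_le_of_le hmeas (g₁ := fun _ => f 0)
    (g₂ := fun x => f 1 + (f 1 - f 0) * g x) ?_ ?_ (integrable_const _)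
    ((integrable_const _).add (hg.const_mul _))
  · exact hg0.mono fun x hx => hm self_mem_Ici hx hx
  · exact hg0.mono fun x hx => hf.le_add_mul_of_monotoneOn hm hx

theorem intervalIntegral.integral_comp_convexCombination {E : Type*} [NormedAddCommGroup E]
    [NormedSpace ℝ E] (F : ℝ → E) {a b : ℝ} (hab : a ≠ b) :
    ∫ s in (0 : ℝ)..1, F ((1 - s) * a + s * b) = ⨍ x in a..b, F x := by
  have hline : ∀ s : ℝ, (1 - s) * a + s * b = a + (b - a) * s := fun s => by ring
  simp only [hline, integral_comp_add_mul F (sub_ne_zero.2 hab.symm), interval_average_eq]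
  ring_nf

theorem ConcaveOn.le_map_interval_average {f g : ℝ → ℝ} {s : Set ℝ} {a b : ℝ}
    (hf : ConcaveOn ℝ s f) (hfc : ContinuousOn f s) (hs : IsClosed s) (hab : a ≠ b)
    (hgs : ∀ᵐ x ∂volume.restrict (Ι a b), g x ∈ s) (hg : IntervalIntegrable g volume a b)
    (hfg : IntervalIntegrable (fun x => f (g x)) volume a b) :
    ⨍ x in a..b, f (g x) ≤ f (⨍ x in a..b, g x) := by
  have hvol : volume (Ι a b) ≠ 0 := by simpa [Real.volume_uIoc, sub_eq_zero] using hab.symm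
  exact hf.le_map_set_average hfc hs hvol (by simp [Real.volume_uIoc]) hgs hg.def' hfg.def'

theorem jensen_transport_general (T : ℝ → ℝ) (hT : Monotone T)
    (g : ℝ → ℝ)
    (hderiv : ∀ᵐ x ∂volume, HasDerivAt T (g x) x)
    (𝒦 : ℝ → ℝ) (h𝒦c : ContinuousOn 𝒦 (Set.Ici 0))
    (h𝒦m : MonotoneOn 𝒦 (Set.Ici 0)) (h𝒦cc : ConcaveOn ℝ (Set.Ici 0) 𝒦) :
    ∀ a b : ℝ, a < b →
      (∫ s in (0:ℝ)..1, 𝒦 (g ((1 - s) * a + s * b))) ≤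
        𝒦 ((T b - T a) / (b - a)) := by
  intro a b hab
  have hg0 := hT.ae_nonneg_of_ae_hasDerivAt hderiv
  have hgi := (hT.monotoneOn _).intervalIntegrable_of_ae_hasDerivAt (a := a) (b := b) hderiv
  have h𝒦gi : IntervalIntegrable (fun x => 𝒦 (g x)) volume a b :=
    ⟨h𝒦cc.integrable_comp_of_monotoneOn h𝒦c h𝒦m hgi.1 (ae_restrict_of_ae hg0),
      h𝒦cc.integrable_comp_of_monotoneOn h𝒦c h𝒦m hgi.2 (ae_restrict_of_ae hg0)⟩
  have havg_nonneg : 0 ≤ ⨍ x in a..b, g x := by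
    rw [interval_average_eq_div]
    exact div_nonneg (integral_nonneg_of_ae hab.le hg0) (sub_pos.2 hab).le
  rw [integral_comp_convexCombination (fun x => 𝒦 (g x)) hab.ne]
  calc ⨍ x in a..b, 𝒦 (g x)
      ≤ 𝒦 (⨍ x in a..b, g x) :=
        h𝒦cc.le_map_interval_average h𝒦c isClosed_Ici hab.ne (ae_restrict_of_ae hg0) hgi h𝒦gi
    _ ≤ 𝒦 ((T b - T a) / (b - a)) :=
        h𝒦m havg_nonneg (div_nonneg (sub_nonneg.2 (hT hab.le)) (sub_pos.2 hab).le)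
          ((hT.monotoneOn _).interval_average_le_slope_of_ae_hasDerivAt hderiv hab)

/-- Jensen-type inequality for monotone transport maps: if `T` is non-decreasing with
a.e. derivative `g ≥ 0` and `𝒦` is continuous, non-decreasing and concave on `[0,∞)`,
then `𝒦((T(b)-T(a))/(b-a)) ≥ ∫₀¹ 𝒦(g((1-s)a+sb)) ds` for all `a < b`. -/
theorem jensen_transport (T : ℝ → ℝ) (hT : Monotone T)
    (g : ℝ → ℝ) (hg : Measurable g) (hg0 : ∀ x, 0 ≤ g x)
    (hderiv : ∀ᵐ x ∂volume, HasDerivAt T (g x) x)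
    (𝒦 : ℝ → ℝ) (h𝒦c : ContinuousOn 𝒦 (Set.Ici 0))
    (h𝒦m : MonotoneOn 𝒦 (Set.Ici 0)) (h𝒦cc : ConcaveOn ℝ (Set.Ici 0) 𝒦) :
    ∀ a b : ℝ, a < b →
      (∫ s in (0:ℝ)..1, 𝒦 (g ((1 - s) * a + s * b))) ≤
        𝒦 ((T b - T a) / (b - a)) :=
  jensen_transport_general T hT g hderiv 𝒦 h𝒦c h𝒦m h𝒦cc
end
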